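/- arXiv:1507.05484 — 8 statements merged into one kernel-verified Lean document; each statement's English description precedes it below -/
import Mathlib

section
/- For every n ≥ 1, the number of functions f : Fin n → Fin n that encode a rooted labelled tree on n vertices (i.e., there exists a root r with f r = r and for every i some iterate of f sends i to r) equals n^(n-1). (Cayley's formula, for which the paper gives a new bijective proof.) -/
/-- A function `f : Fin n → Fin n` encodes a rooted labelled tree (Cayley tree)
on `n` vertices: there is a root `r` fixed by `f`, and every vertex reaches `r`
under iteration of `f`. -/
def IsTreeMap {n : ℕ} (f : Fin n → Fin n) : Prop :=
  ∃ r : Fin n, f r = r ∧ ∀ i : Fin n, ∃ k : ℕ, f^[k] i = r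

open Function Finset
set_option linter.unusedSectionVars false

namespace CayleyAux

variable {n : ℕ} [NeZero n]

/-! ### indexing within a finset -/

/-- index of `x` in the increasing enumeration of `S` -/
def idx (S : Finset (Fin n)) (x : Fin n) : ℕ := (S.filter (fun y => y < x)).card

/-- the `i`-th smallest element of `S` (junk value outside range) -/
noncomputable def nth (S : Finset (Fin n)) (i : ℕ) : Fin n :=
  if h : i < S.card then S.orderEmbOfFin rfl ⟨i, h⟩ else default

lemma nth_mem {S : Finset (Fin n)} {i : ℕ} (h : i < S.card) : nth S i ∈ S := by
  rw [nth, dif_pos h]; exact S.orderEmbOfFin_mem rfl _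

lemma idx_lt_card {S : Finset (Fin n)} {x : Fin n} (hx : x ∈ S) : idx S x < S.card := by
  have : S.filter (fun y => y < x) ⊂ S := by
    refine Finset.ssubset_iff_of_subset (Finset.filter_subset _ _) |>.2 ⟨x, hx, ?_⟩
    simp
  exact Finset.card_lt_card this

lemma idx_nth {S : Finset (Fin n)} {i : ℕ} (h : i < S.card) : idx S (nth S i) = i := by
  rw [nth, dif_pos h, idx]
  have key : S.filter (fun y => y < S.orderEmbOfFin rfl ⟨i, h⟩)
      = (Finset.filter (fun j : Fin S.card => (j : ℕ) < i) Finset.univ).image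
          (S.orderEmbOfFin rfl) := by
    ext y
    simp only [Finset.mem_filter, Finset.mem_image, Finset.mem_univ, true_and]
    constructor
    · rintro ⟨hyS, hlt⟩
      have : y ∈ Set.range (S.orderEmbOfFin rfl) := by
        rw [Finset.range_orderEmbOfFin]; exact hyS
      obtain ⟨j, rfl⟩ := this
      exact ⟨j, by simpa [Fin.lt_def, OrderEmbedding.lt_iff_lt] using hlt, rfl⟩
    · rintro ⟨j, hj, rfl⟩
      refine ⟨S.orderEmbOfFin_mem rfl _, ?_⟩
      exact (OrderEmbedding.lt_iff_lt _).2 (by simpa [Fin.lt_def] using hj)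
  rw [key, Finset.card_image_of_injective _ (S.orderEmbOfFin rfl).injective]
  have : Finset.filter (fun j : Fin S.card => (j:ℕ) < i) Finset.univ = Finset.Iio ⟨i,h⟩ := by
    ext j; simp [Fin.lt_def]
  rw [this, Fin.card_Iio]

lemma nth_idx {S : Finset (Fin n)} {x : Fin n} (hx : x ∈ S) : nth S (idx S x) = x := by
  have hx' : x ∈ Set.range (S.orderEmbOfFin rfl) := by
    rw [Finset.range_orderEmbOfFin]; exact hx
  obtain ⟨j, rfl⟩ := hx'
  have hj : (j : ℕ) < S.card := j.2
  have : idx S (S.orderEmbOfFin rfl j) = (j : ℕ) := by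
    have := idx_nth (S := S) hj
    rwa [nth, dif_pos hj, Fin.eta] at this
  rw [this, nth, dif_pos hj, Fin.eta]

lemma nth_injOn {S : Finset (Fin n)} {i j : ℕ} (hi : i < S.card) (hj : j < S.card)
    (h : nth S i = nth S j) : i = j := by
  have := congrArg (idx S) h
  rwa [idx_nth hi, idx_nth hj] at this


variable {n : ℕ} [NeZero n]

/-- the finset of periodic points of `g` -/
noncomputable def P (g : Fin n → Fin n) : Finset (Fin n) :=
  @Finset.filter _ (fun x => x ∈ periodicPts g) (Classical.decPred _) Finset.univ

lemma mem_P {g : Fin n → Fin n} {x : Fin n} : x ∈ P g ↔ x ∈ periodicPts g := by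
  simp [P]

lemma exists_iterate_mem_P (g : Fin n → Fin n) (x : Fin n) : ∃ t, g^[t] x ∈ P g := by
  obtain ⟨a, b, hab, h⟩ := Finite.exists_ne_map_eq_of_infinite (fun t : ℕ => g^[t] x)
  wlog hlt : a < b generalizing a b
  · exact this b a hab.symm h.symm (by omega)
  refine ⟨a, mem_P.2 (mk_mem_periodicPts (n := b - a) (by omega) ?_)⟩
  show g^[b-a] (g^[a] x) = g^[a] x
  rw [← Function.iterate_add_apply]
  rw [show b - a + a = b by omega]
  exact h.symm

lemma P_nonempty (g : Fin n → Fin n) : (P g).Nonempty := by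
  obtain ⟨t, ht⟩ := exists_iterate_mem_P g default
  exact ⟨_, ht⟩

lemma apply_mem_P {g : Fin n → Fin n} {x : Fin n} (hx : x ∈ P g) : g x ∈ P g := by
  rw [mem_P, mem_periodicPts] at *
  obtain ⟨p, hp, h⟩ := hx
  exact ⟨p, hp, h.apply⟩

lemma surjOn_P (g : Fin n → Fin n) : Set.SurjOn g (P g) (P g) := by
  intro x hx
  have hx' : x ∈ periodicPts g := mem_P.1 (Finset.mem_coe.1 hx)
  obtain ⟨p, hp, h⟩ := mem_periodicPts.1 hx'
  have h1 : g^[p-1] x ∈ periodicPts g := mk_mem_periodicPts hp (h.apply_iterate _)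
  refine ⟨g^[p-1] x, Finset.mem_coe.2 (mem_P.2 h1), ?_⟩
  have : g (g^[p-1] x) = g^[p] x := by
    rw [← Function.iterate_succ_apply' g (p-1) x, Nat.succ_eq_add_one,
      show p - 1 + 1 = p by omega]
  rw [this]; exact h

lemma bijOn_P (g : Fin n → Fin n) : Set.BijOn g (P g) (P g) := by
  have hm : Set.MapsTo g (P g) (P g) := fun x hx => by
    simpa using apply_mem_P (by simpa using hx)
  exact ((P g : Set (Fin n)).toFinite.surjOn_iff_bijOn_of_mapsTo hm).1 (surjOn_P g)

lemma injOn_P (g : Fin n → Fin n) : Set.InjOn g (P g) := (bijOn_P g).injOn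



/-! ### the forward map (Joyal) -/

variable (g : Fin n → Fin n)

/-- the word `a_i = g(c_i)` where `c_i` is the `i`-th smallest periodic point -/
noncomputable def wrd (i : ℕ) : Fin n := g (nth (P g) i)

/-- inverse of `g` on its periodic points -/
noncomputable def ginv (x : Fin n) : Fin n :=
  if h : ∃ y ∈ P g, g y = x then h.choose else default

variable {g}

lemma ginv_g {y : Fin n} (hy : y ∈ P g) : ginv g (g y) = y := by
  have h : ∃ y' ∈ P g, g y' = g y := ⟨y, hy, rfl⟩
  rw [ginv, dif_pos h]
  exact injOn_P g (Finset.mem_coe.2 h.choose_spec.1) (Finset.mem_coe.2 hy) h.choose_spec.2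

lemma g_ginv {x : Fin n} (hx : x ∈ P g) : g (ginv g x) = x ∧ ginv g x ∈ P g := by
  obtain ⟨y, hy, rfl⟩ := surjOn_P g (Finset.mem_coe.2 hx)
  rw [ginv_g (Finset.mem_coe.1 hy)]
  exact ⟨rfl, Finset.mem_coe.1 hy⟩

variable (g)

/-- the forward map of Joyal's bijection: replace the permutation on periodic
points by a path following the sorted order -/
noncomputable def F : Fin n → Fin n := fun x =>
  if x ∈ P g then
    (if idx (P g) (ginv g x) + 1 < (P g).card then wrd g (idx (P g) (ginv g x) + 1) else x)
  else g x

/-- the root of the tree produced by `F` -/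
noncomputable def rt : Fin n := wrd g ((P g).card - 1)

/-- the marked vertex -/
noncomputable def mk : Fin n := wrd g 0

variable {g}

lemma wrd_mem {i : ℕ} (h : i < (P g).card) : wrd g i ∈ P g :=
  apply_mem_P (nth_mem h)

lemma wrd_inj {i j : ℕ} (hi : i < (P g).card) (hj : j < (P g).card)
    (h : wrd g i = wrd g j) : i = j := by
  have := injOn_P g (Finset.mem_coe.2 (nth_mem hi)) (Finset.mem_coe.2 (nth_mem hj)) h
  exact nth_injOn hi hj this

lemma F_wrd {j : ℕ} (hj : j < (P g).card) :
    F g (wrd g j) = if j + 1 < (P g).card then wrd g (j + 1) else wrd g j := by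
  have hmem : wrd g j ∈ P g := wrd_mem hj
  have hginv : ginv g (wrd g j) = nth (P g) j := ginv_g (nth_mem hj)
  have hidx : idx (P g) (ginv g (wrd g j)) = j := by rw [hginv, idx_nth hj]
  rw [F, if_pos hmem, hidx]

lemma F_eq_of_not_mem {x : Fin n} (hx : x ∉ P g) : F g x = g x := by
  rw [F, if_neg hx]

lemma F_rt : F g (rt g) = rt g := by
  have hpos : 0 < (P g).card := Finset.card_pos.2 (P_nonempty g)
  have h := F_wrd (g := g) (j := (P g).card - 1) (by omega)
  rw [if_neg (by omega)] at h
  exact h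

lemma F_iter_wrd {t j : ℕ} (h : j + t ≤ (P g).card - 1) :
    (F g)^[t] (wrd g j) = wrd g (j + t) := by
  have hpos : 0 < (P g).card := Finset.card_pos.2 (P_nonempty g)
  induction t generalizing j with
  | zero => simp
  | succ t ih =>
      rw [Function.iterate_succ_apply]
      have hj : j < (P g).card := by omega
      rw [F_wrd hj, if_pos (by omega)]
      rw [ih (by omega)]
      congr 1
      omega

lemma reach_rt_of_mem_P {x : Fin n} (hx : x ∈ P g) : ∃ t, (F g)^[t] x = rt g := by
  have hpos : 0 < (P g).card := Finset.card_pos.2 (P_nonempty g)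
  obtain ⟨hgg, hmem⟩ := g_ginv hx
  have hidx : idx (P g) (ginv g x) < (P g).card := idx_lt_card hmem
  have hxw : x = wrd g (idx (P g) (ginv g x)) := by
    rw [wrd, nth_idx hmem, hgg]
  set j := idx (P g) (ginv g x)
  refine ⟨(P g).card - 1 - j, ?_⟩
  rw [hxw, F_iter_wrd (by omega), rt]
  congr 1
  omega

lemma F_iter_eq_g_iter {x : Fin n} {t : ℕ} (h : ∀ s < t, g^[s] x ∉ P g) :
    (F g)^[t] x = g^[t] x := by
  induction t with
  | zero => simp
  | succ t ih =>
      rw [Function.iterate_succ_apply', Function.iterate_succ_apply',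
        ih (fun s hs => h s (by omega)), F_eq_of_not_mem (h t (by omega))]

lemma F_isTreeMap : IsTreeMap (F g) := by
  refine ⟨rt g, F_rt, fun x => ?_⟩
  have hex : ∃ t, g^[t] x ∈ P g := exists_iterate_mem_P g x
  classical
  set T := Nat.find hex with hT
  have hTmem : g^[T] x ∈ P g := Nat.find_spec hex
  have hmin : ∀ s < T, g^[s] x ∉ P g := fun s hs => Nat.find_min hex hs
  have h1 : (F g)^[T] x = g^[T] x := F_iter_eq_g_iter hmin
  obtain ⟨t2, ht2⟩ := reach_rt_of_mem_P hTmem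
  refine ⟨t2 + T, ?_⟩
  rw [Function.iterate_add_apply, h1, ht2]

/-! ### the inverse map -/

section Inverse

variable (f : Fin n → Fin n) (m : Fin n)

open scoped Classical in
/-- the root of a tree map (junk if not a tree map) -/
noncomputable def root : Fin n := if h : IsTreeMap f then h.choose else default

variable {f}

lemma root_spec (hf : IsTreeMap f) :
    f (root f) = root f ∧ ∀ i, ∃ t, f^[t] i = root f := by
  rw [root, dif_pos hf]; exact hf.choose_spec

lemma root_unique (hf : IsTreeMap f) {r : Fin n} (hr : f r = r) : r = root f := by
  obtain ⟨t, ht⟩ := (root_spec hf).2 r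
  rw [← ht, Function.iterate_fixed hr]

variable (f)

/-- number of steps from the mark `m` to the root -/
noncomputable def dd : ℕ := sInf {t | f^[t] m = root f}

variable {f m}

lemma dd_nonempty (hf : IsTreeMap f) : {t | f^[t] m = root f}.Nonempty :=
  (root_spec hf).2 m

lemma dd_spec (hf : IsTreeMap f) : f^[dd f m] m = root f :=
  Nat.sInf_mem (dd_nonempty hf)

lemma dd_min {t : ℕ} (ht : t < dd f m) : f^[t] m ≠ root f :=
  Nat.notMem_of_lt_sInf ht

variable (f m)

/-- the path from the mark to the root, as a finset -/
noncomputable def Cp : Finset (Fin n) :=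
  (Finset.range (dd f m + 1)).image (fun t => f^[t] m)

variable {f m}

lemma path_inj (hf : IsTreeMap f) {i j : ℕ} (hi : i ≤ dd f m) (hj : j ≤ dd f m)
    (h : f^[i] m = f^[j] m) : i = j := by
  wlog hlt : i < j generalizing i j
  · rcases Nat.lt_or_ge j i with h' | h'
    · exact (this hj hi h.symm h').symm
    · omega
  exfalso
  set q := j - i with hq
  have hq0 : 0 < q := by omega
  have hy : IsPeriodicPt f q (f^[i] m) := by
    show f^[q] (f^[i] m) = f^[i] m
    rw [← Function.iterate_add_apply, show q + i = j by omega]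
    exact h.symm
  have hroot : f^[(dd f m - i) % q] (f^[i] m) = root f := by
    rw [hy.iterate_mod_apply, ← Function.iterate_add_apply,
      show dd f m - i + i = dd f m by omega]
    exact dd_spec hf
  have hcalc : f^[(dd f m - i) % q + i] m = root f := by
    rw [Function.iterate_add_apply]; exact hroot
  have hlt2 : (dd f m - i) % q + i < dd f m := by
    have := Nat.mod_lt (dd f m - i) hq0
    omega
  exact dd_min hlt2 hcalc

lemma card_Cp (hf : IsTreeMap f) : (Cp f m).card = dd f m + 1 := by
  rw [Cp, Finset.card_image_of_injOn, Finset.card_range]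
  intro i hi j hj h
  simp only [Finset.coe_range, Set.mem_Iio] at hi hj
  exact path_inj hf (by omega) (by omega) h

lemma iter_mem_Cp {i : ℕ} (hi : i ≤ dd f m) : f^[i] m ∈ Cp f m :=
  Finset.mem_image.2 ⟨i, Finset.mem_range.2 (by omega), rfl⟩

lemma mem_Cp_iff {x : Fin n} : x ∈ Cp f m ↔ ∃ i ≤ dd f m, f^[i] m = x := by
  simp only [Cp, Finset.mem_image, Finset.mem_range]
  constructor
  · rintro ⟨i, hi, rfl⟩; exact ⟨i, by omega, rfl⟩
  · rintro ⟨i, hi, rfl⟩; exact ⟨i, by omega, rfl⟩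

variable (f m)

/-- the inverse map of Joyal's bijection -/
noncomputable def G : Fin n → Fin n := fun x =>
  if x ∈ Cp f m then f^[idx (Cp f m) x] m else f x

variable {f m}

lemma G_eq_of_not_mem {x : Fin n} (hx : x ∉ Cp f m) : G f m x = f x := by
  rw [G, if_neg hx]

lemma G_nth (hf : IsTreeMap f) {i : ℕ} (hi : i ≤ dd f m) :
    G f m (nth (Cp f m) i) = f^[i] m := by
  have hi' : i < (Cp f m).card := by rw [card_Cp hf]; omega
  rw [G, if_pos (nth_mem hi'), idx_nth hi']

lemma G_mem_Cp (hf : IsTreeMap f) {x : Fin n} (hx : x ∈ Cp f m) : G f m x ∈ Cp f m := by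
  rw [G, if_pos hx]
  have := idx_lt_card hx
  rw [card_Cp hf] at this
  exact iter_mem_Cp (by omega)

lemma G_surjOn (hf : IsTreeMap f) : Set.SurjOn (G f m) (Cp f m) (Cp f m) := by
  intro x hx
  obtain ⟨i, hi, rfl⟩ := mem_Cp_iff.1 (Finset.mem_coe.1 hx)
  have hi' : i < (Cp f m).card := by rw [card_Cp hf]; omega
  exact ⟨nth (Cp f m) i, Finset.mem_coe.2 (nth_mem hi'), G_nth hf hi⟩

lemma G_injOn (hf : IsTreeMap f) : Set.InjOn (G f m) (Cp f m) := by
  have hm : Set.MapsTo (G f m) (Cp f m) (Cp f m) := fun x hx =>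
    Finset.mem_coe.2 (G_mem_Cp hf (Finset.mem_coe.1 hx))
  exact ((((Cp f m : Set (Fin n))).toFinite.surjOn_iff_bijOn_of_mapsTo hm).1
    (G_surjOn hf)).injOn

/-- cancellation for maps injective on an invariant set -/
lemma iterate_cancel {h : Fin n → Fin n} {S : Finset (Fin n)}
    (hmaps : ∀ y ∈ S, h y ∈ S) (hinj : Set.InjOn h S) {x : Fin n} (hx : x ∈ S)
    {a q : ℕ} (hh : h^[a] x = h^[a + q] x) : h^[q] x = x := by
  have hiter : ∀ s, h^[s] x ∈ S := by
    intro s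
    induction s with
    | zero => simpa
    | succ s ih => rw [Function.iterate_succ_apply']; exact hmaps _ ih
  induction a with
  | zero => simpa using hh.symm
  | succ a ih =>
      apply ih
      rw [Function.iterate_succ_apply', show a + 1 + q = (a + q) + 1 by omega,
        Function.iterate_succ_apply'] at hh
      exact hinj (Finset.mem_coe.2 (hiter a)) (Finset.mem_coe.2 (hiter (a + q))) hh

lemma per_G (hf : IsTreeMap f) : P (G f m) = Cp f m := by
  ext x
  constructor
  · intro hx
    rw [mem_P, mem_periodicPts] at hx
    obtain ⟨p, hp, hper⟩ := hx
    by_contra hxc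
    -- the orbit of x avoids Cp
    have horb : ∀ s, (G f m)^[s] x ∉ Cp f m := by
      intro s hs
      -- once in Cp, always in Cp
      have hstay : ∀ u, (G f m)^[s + u] x ∈ Cp f m := by
        intro u
        induction u with
        | zero => simpa
        | succ u ih =>
            rw [show s + (u+1) = (s+u) + 1 by omega, Function.iterate_succ_apply']
            exact G_mem_Cp hf ih
      have hmult : (G f m)^[p * (s + 1)] x = x := hper.mul_const (s + 1)
      have hge : s ≤ p * (s + 1) := by nlinarith
      have := hstay (p * (s + 1) - s)
      rw [show s + (p * (s+1) - s) = p * (s+1) by omega, hmult] at this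
      exact hxc this
    -- hence G agrees with f along the orbit of x
    have hGf : ∀ s, (G f m)^[s] x = f^[s] x := by
      intro s
      induction s with
      | zero => rfl
      | succ s ih =>
          rw [Function.iterate_succ_apply', Function.iterate_succ_apply', ih,
            ← ih, G_eq_of_not_mem (horb s), ih]
    -- so x is f-periodic, hence equals the root, contradiction
    have hfper : f^[p] x = x := by rw [← hGf]; exact hper
    obtain ⟨t, ht⟩ := (root_spec hf).2 x
    have hx_root : x = root f := by
      have h1 : f^[p * (t + 1)] x = x := by
        have : IsPeriodicPt f (p * (t+1)) x := (show IsPeriodicPt f p x from hfper).mul_const _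
        exact this
      have h2 : p * (t + 1) = (p * (t+1) - t) + t := by
        have : t + 1 ≤ p * (t + 1) := Nat.le_mul_of_pos_left _ hp
        omega
      rw [h2, Function.iterate_add_apply, ht,
        Function.iterate_fixed (root_spec hf).1] at h1
      exact h1.symm
    apply hxc
    rw [hx_root, ← dd_spec (m := m) hf]
    exact iter_mem_Cp le_rfl
  · intro hx
    rw [mem_P, mem_periodicPts]
    have hmaps : ∀ y ∈ Cp f m, G f m y ∈ Cp f m := fun y hy => G_mem_Cp hf hy
    obtain ⟨a, b, hab, h⟩ := Finite.exists_ne_map_eq_of_infinite (fun t : ℕ => (G f m)^[t] x)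
    wlog hlt : a < b generalizing a b
    · exact this b a hab.symm h.symm (by omega)
    refine ⟨b - a, by omega, ?_⟩
    show (G f m)^[b-a] x = x
    exact iterate_cancel hmaps (G_injOn hf) hx
      (show (G f m)^[a] x = (G f m)^[a + (b - a)] x by rw [show a + (b-a) = b by omega]; exact h)

end Inverse

/-! ### round trips -/

section RT2

variable {f : Fin n → Fin n} {m : Fin n}

lemma card_P_G (hf : IsTreeMap f) : (P (G f m)).card = dd f m + 1 := by
  rw [per_G hf, card_Cp hf]

lemma wrd_G (hf : IsTreeMap f) {i : ℕ} (hi : i ≤ dd f m) :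
    wrd (G f m) i = f^[i] m := by
  rw [wrd, per_G hf]
  exact G_nth hf hi

lemma mk_G (hf : IsTreeMap f) : mk (G f m) = m := by
  rw [mk, wrd_G hf (Nat.zero_le _)]
  rfl

lemma F_G (hf : IsTreeMap f) : F (G f m) = f := by
  funext x
  by_cases hx : x ∈ Cp f m
  · obtain ⟨i, hi, rfl⟩ := mem_Cp_iff.1 hx
    have hcard : i < (P (G f m)).card := by rw [card_P_G hf]; omega
    have key := F_wrd (g := G f m) (j := i) hcard
    rw [wrd_G hf hi] at key
    rcases Nat.lt_or_ge i (dd f m) with h2 | h2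
    · rw [if_pos (by rw [card_P_G hf]; omega), wrd_G hf (by omega)] at key
      rw [key, Function.iterate_succ_apply']
    · have hieq : i = dd f m := by omega
      subst hieq
      rw [if_neg (by rw [card_P_G hf]; omega)] at key
      rw [key, dd_spec hf, (root_spec hf).1]
  · rw [F_eq_of_not_mem (by rw [per_G hf]; exact hx), G_eq_of_not_mem hx]

end RT2

section RT1

variable {g : Fin n → Fin n}

lemma root_F : root (F g) = rt g :=
  (root_unique (F_isTreeMap (g := g)) F_rt).symm

lemma iter_F_mk {t : ℕ} (ht : t ≤ (P g).card - 1) :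
    (F g)^[t] (mk g) = wrd g t := by
  have := F_iter_wrd (g := g) (j := 0) (t := t) (by omega)
  simpa [mk] using this

lemma dd_F : dd (F g) (mk g) = (P g).card - 1 := by
  have hpos : 0 < (P g).card := Finset.card_pos.2 (P_nonempty g)
  have hmem : (F g)^[(P g).card - 1] (mk g) = root (F g) := by
    rw [iter_F_mk le_rfl, root_F]; rfl
  have hle : dd (F g) (mk g) ≤ (P g).card - 1 := Nat.sInf_le hmem
  rcases Nat.lt_or_ge (dd (F g) (mk g)) ((P g).card - 1) with hlt | hge
  · exfalso
    have hd := dd_spec (m := mk g) (F_isTreeMap (g := g))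
    rw [iter_F_mk (by omega), root_F] at hd
    have : dd (F g) (mk g) = (P g).card - 1 :=
      wrd_inj (by omega) (by omega) hd
    omega
  · omega

lemma Cp_F : Cp (F g) (mk g) = P g := by
  have hpos : 0 < (P g).card := Finset.card_pos.2 (P_nonempty g)
  ext x
  rw [mem_Cp_iff, dd_F]
  constructor
  · rintro ⟨i, hi, rfl⟩
    rw [iter_F_mk hi]
    exact wrd_mem (by omega)
  · intro hx
    obtain ⟨y, hy, rfl⟩ := surjOn_P g (Finset.mem_coe.2 hx)
    have hy' : y ∈ P g := Finset.mem_coe.1 hy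
    have hidx : idx (P g) y < (P g).card := idx_lt_card hy'
    refine ⟨idx (P g) y, by omega, ?_⟩
    rw [iter_F_mk (by omega), wrd, nth_idx hy']

lemma G_F : G (F g) (mk g) = g := by
  funext x
  by_cases hx : x ∈ P g
  · have hx' : x ∈ Cp (F g) (mk g) := by rw [Cp_F]; exact hx
    rw [G, if_pos hx', Cp_F]
    have hidx : idx (P g) x < (P g).card := idx_lt_card hx
    rw [iter_F_mk (by omega), wrd, nth_idx hx]
  · rw [G_eq_of_not_mem (by rw [Cp_F]; exact hx), F_eq_of_not_mem hx]

end RT1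

/-- Joyal's bijection -/
noncomputable def treeEquiv : (Fin n → Fin n) ≃ ({f : Fin n → Fin n // IsTreeMap f} × Fin n) where
  toFun g := (⟨F g, F_isTreeMap⟩, mk g)
  invFun p := G p.1.1 p.2
  left_inv g := G_F
  right_inv p := by
    obtain ⟨⟨f, hf⟩, m⟩ := p
    simp only [Prod.mk.injEq, Subtype.mk.injEq]
    exact ⟨F_G hf, mk_G hf⟩

end CayleyAux

/-- Cayley's formula: the number of rooted labelled trees on `n` vertices,
encoded as functions, is `n ^ (n - 1)`. -/
theorem cayley_formula (n : ℕ) (hn : 1 ≤ n) :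
    Nat.card {f : Fin n → Fin n // IsTreeMap f} = n ^ (n - 1) := by
  haveI : NeZero n := ⟨by omega⟩
  have hcard : Nat.card (Fin n → Fin n)
      = Nat.card ({f : Fin n → Fin n // IsTreeMap f} × Fin n) :=
    Nat.card_congr CayleyAux.treeEquiv
  rw [Nat.card_prod, Nat.card_eq_fintype_card (α := Fin n → Fin n)] at hcard
  simp only [Fintype.card_fun, Fintype.card_fin, Nat.card_eq_fintype_card (α := Fin n)] at hcard
  have hn' : n ^ n = Nat.card {f : Fin n → Fin n // IsTreeMap f} * n := by
    simpa using hcard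
  have hpow : n ^ (n - 1) * n = n ^ n := by
    rw [← pow_succ, show n - 1 + 1 = n by omega]
  have := hn'.symm.trans hpow.symm
  exact (Nat.eq_of_mul_eq_mul_right (by omega) this.symm).symm
end

section
/- For every n ≥ 1 and every m, R_{n,m} = n · F_{n,m}, where F_{n,m} is the number of tree-encoding functions f : Fin n → Fin n with exactly m ascending runs and R_{n,m} is the number of all functions f : Fin n → Fin n with exactly m ascending runs. -/
/-- The number of ascending runs of `f`: the number of elements `j` that are the
start of an ascending run, i.e. every preimage `i` of `j` satisfies `j ≤ i`. -/
def numRuns {n : ℕ} (f : Fin n → Fin n) : ℕ :=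
  (Finset.univ.filter (fun j : Fin n => ∀ i : Fin n, f i = j → j ≤ i)).card

/-- `F_{n,m}`: the number of tree-encoding functions on `Fin n` with exactly
`m` ascending runs. -/
noncomputable def treeRunCount (n m : ℕ) : ℕ :=
  Nat.card {f : Fin n → Fin n // IsTreeMap f ∧ numRuns f = m}

/-- `R_{n,m}`: the number of functions on `Fin n` with exactly `m` ascending runs. -/
noncomputable def mappingRunCount (n m : ℕ) : ℕ :=
  Nat.card {f : Fin n → Fin n // numRuns f = m}

open Classical Function
noncomputable section
namespace RunsProof
variable {N : ℕ}

noncomputable def Orb (t : Fin N → Fin N) (x : Fin N) : Finset (Fin N) :=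
  Finset.univ.filter (fun y => ∃ k, t^[k] x = y)

noncomputable def Cyc (f : Fin N → Fin N) (v : Fin N) : Finset (Fin N) :=
  Finset.univ.filter (fun x => x ≠ v ∧ ∃ k, 0 < k ∧ f^[k] x = x)

lemma mem_Orb {t : Fin N → Fin N} {x y : Fin N} : y ∈ Orb t x ↔ ∃ k, t^[k] x = y := by
  simp [Orb]

lemma mem_Cyc {f : Fin N → Fin N} {v x : Fin N} :
    x ∈ Cyc f v ↔ x ≠ v ∧ ∃ k, 0 < k ∧ f^[k] x = x := by
  simp [Cyc]

lemma self_mem_Orb {t : Fin N → Fin N} {x : Fin N} : x ∈ Orb t x :=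
  mem_Orb.2 ⟨0, rfl⟩

lemma Orb_subset_of_mem {t : Fin N → Fin N} {x y : Fin N} (h : y ∈ Orb t x) :
    Orb t y ⊆ Orb t x := by
  obtain ⟨k, hk⟩ := mem_Orb.1 h
  intro z hz
  obtain ⟨j, hj⟩ := mem_Orb.1 hz
  exact mem_Orb.2 ⟨j + k, by rw [Function.iterate_add_apply, hk, hj]⟩

lemma apply_mem_Orb {t : Fin N → Fin N} {x : Fin N} : t x ∈ Orb t x :=
  mem_Orb.2 ⟨1, rfl⟩

lemma periodic_reach_fixed {f : Fin N → Fin N} {v y : Fin N} (hv : f v = v)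
    (hy : ∃ c, 0 < c ∧ f^[c] y = y) {j : ℕ} (hj : f^[j] y = v) : y = v := by
  obtain ⟨c, hc, hcy⟩ := hy
  have hmul : ∀ k, f^[c * k] y = y := by
    intro k
    rw [Function.iterate_mul]
    exact Function.iterate_fixed hcy k
  have hle : j ≤ c * j := Nat.le_mul_of_pos_left j hc
  calc y = f^[c * j] y := (hmul j).symm
    _ = f^[c * j - j] (f^[j] y) := by
        rw [← Function.iterate_add_apply, Nat.sub_add_cancel hle]
    _ = v := by rw [hj]; exact Function.iterate_fixed hv _

lemma exists_reach_periodic (f : Fin N → Fin N) (x : Fin N) :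
    ∃ k, ∃ c, 0 < c ∧ f^[c] (f^[k] x) = f^[k] x := by
  have hcard : Fintype.card (Fin N) < Fintype.card (Fin (N + 1)) := by simp
  obtain ⟨a, b, hab, heq⟩ := Fintype.exists_ne_map_eq_of_card_lt
    (fun k : Fin (N + 1) => f^[(k : ℕ)] x) hcard
  rcases Ne.lt_or_gt (fun h => hab (by exact_mod_cast Fin.ext (by exact_mod_cast congrArg Fin.val h))) with h | h
  · exact ⟨(a : ℕ), (b : ℕ) - a, by omega, by
      rw [← Function.iterate_add_apply, Nat.sub_add_cancel h.le, heq]⟩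
  · exact ⟨(b : ℕ), (a : ℕ) - b, by omega, by
      rw [← Function.iterate_add_apply, Nat.sub_add_cancel h.le, ← heq]⟩

/-- iterates of a periodic point are periodic -/
lemma iterate_periodic {f : Fin N → Fin N} {y : Fin N} (hy : ∃ c, 0 < c ∧ f^[c] y = y)
    (j : ℕ) : ∃ c, 0 < c ∧ f^[c] (f^[j] y) = f^[j] y := by
  obtain ⟨c, hc, hcy⟩ := hy
  exact ⟨c, hc, by
    rw [← Function.iterate_add_apply, Nat.add_comm, Function.iterate_add_apply, hcy]⟩

section Step
variable {f f' : Fin N → Fin N} {v m h : Fin N}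

/-- hypotheses of one step of Phi -/
structure StepH (f f' : Fin N → Fin N) (v m h : Fin N) : Prop where
  hv : f v = v
  hm : m ∈ Cyc f v
  hmax : ∀ x ∈ Cyc f v, x ≤ m
  hh : h = f m
  hf' : f' = Function.update (Function.update f m m) v h

namespace StepH
variable (H : StepH f f' v m h)
include H

lemma m_ne_v : m ≠ v := (mem_Cyc.1 H.hm).1

lemma m_per : ∃ c, 0 < c ∧ f^[c] m = m := (mem_Cyc.1 H.hm).2

lemma ex_reach : ∃ k, f^[k] h = m := by
  obtain ⟨c, hc, hcm⟩ := H.m_per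
  refine ⟨c - 1, ?_⟩
  have : f^[c - 1 + 1] m = m := by rw [Nat.sub_add_cancel hc]; exact hcm
  rwa [Function.iterate_succ_apply, ← H.hh] at this

/-- minimal travel time from h to m -/
noncomputable def K : ℕ := Nat.find H.ex_reach

lemma hK : f^[H.K] h = m := Nat.find_spec H.ex_reach

lemma hK_min : ∀ j < H.K, f^[j] h ≠ m := fun j hj => Nat.find_min H.ex_reach hj

lemma stretch_per (j : ℕ) : ∃ c, 0 < c ∧ f^[c] (f^[j] h) = f^[j] h := by
  have : ∃ c, 0 < c ∧ f^[c] (f m) = f m := by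
    obtain ⟨c, hc, hcm⟩ := H.m_per
    exact ⟨c, hc, by rw [← Function.iterate_succ_apply, Function.iterate_succ_apply', hcm]⟩
  simpa [H.hh] using iterate_periodic this j

lemma stretch_ne_v (j : ℕ) : f^[j] h ≠ v := by
  intro hyv
  have hhp : ∃ c, 0 < c ∧ f^[c] h = h := by simpa using H.stretch_per 0
  have hhv : h = v := periodic_reach_fixed H.hv hhp hyv
  obtain ⟨K, h1⟩ := H.ex_reach
  rw [hhv] at h1
  exact H.m_ne_v (by rw [← h1]; exact Function.iterate_fixed H.hv _)

lemma stretch_mem (j : ℕ) : f^[j] h ∈ Cyc f v :=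
  mem_Cyc.2 ⟨H.stretch_ne_v j, H.stretch_per j⟩

lemma f'_m : f' m = m := by
  rw [H.hf', Function.update_of_ne H.m_ne_v, Function.update_self]

lemma f'_v : f' v = h := by
  rw [H.hf', Function.update_self]

lemma f'_other {x : Fin N} (hx1 : x ≠ v) (hx2 : x ≠ m) : f' x = f x := by
  rw [H.hf', Function.update_of_ne hx1, Function.update_of_ne hx2]

lemma stretch_iter : ∀ j ≤ H.K, f'^[j] h = f^[j] h := by
  intro j hj
  induction j with
  | zero => rfl
  | succ i ih =>
    rw [Function.iterate_succ_apply', Function.iterate_succ_apply',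
      ih (Nat.le_of_succ_le hj)]
    exact H.f'_other (H.stretch_ne_v i) (H.hK_min i (Nat.lt_of_succ_le hj))

/-- absorption : a f'-periodic point reaching m equals m -/
lemma absorb {z : Fin N} {s : ℕ} (hs : f'^[s] z = m)
    (hz : ∃ c, 0 < c ∧ f'^[c] z = z) : z = m :=
  periodic_reach_fixed H.f'_m hz hs

lemma v_reaches_m : f'^[H.K + 1] v = m := by
  rw [Function.iterate_add_apply]
  simp only [Function.iterate_one, H.f'_v]
  rw [H.stretch_iter H.K le_rfl]
  exact H.hK

lemma v_not_per : ¬ ∃ c, 0 < c ∧ f'^[c] v = v := by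
  intro hc
  exact H.m_ne_v (H.absorb H.v_reaches_m hc).symm

lemma stretch_not_mem (j : ℕ) (hj : j ≤ H.K) : f^[j] h ∉ Cyc f' m := by
  intro hmem
  obtain ⟨hne, hper⟩ := mem_Cyc.1 hmem
  apply hne
  apply H.absorb _ hper
  · exact H.K - j
  rw [← H.stretch_iter j hj, ← Function.iterate_add_apply, Nat.sub_add_cancel hj]
  exact H.stretch_iter H.K le_rfl ▸ H.hK

lemma cyc_subset : Cyc f' m ⊆ Cyc f v := by
  intro x hx
  obtain ⟨hxm, hper⟩ := mem_Cyc.1 hx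
  -- x's orbit avoids m
  have hnom : ∀ s, f'^[s] x ≠ m := by
    intro s hs
    exact hxm (H.absorb hs hper)
  -- x ≠ v and orbit avoids v
  have hnov : ∀ s, f'^[s] x ≠ v := by
    intro s hs
    have hvper : ∃ c, 0 < c ∧ f'^[c] v = v := by
      have := iterate_periodic hper s
      rw [hs] at this
      exact this
    exact H.v_not_per hvper
  have hiter : ∀ j, f'^[j] x = f^[j] x := by
    intro j
    induction j with
    | zero => rfl
    | succ i ih =>
      rw [Function.iterate_succ_apply', Function.iterate_succ_apply', ← ih]
      exact H.f'_other (hnov i) (hnom i)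
  obtain ⟨c, hc, hcx⟩ := hper
  refine mem_Cyc.2 ⟨by simpa using hnov 0, c, hc, ?_⟩
  rw [← hiter c]; exact hcx

lemma m_not_mem : m ∉ Cyc f' m := fun hx => (mem_Cyc.1 hx).1 rfl

lemma card_lt : (Cyc f' m).card < (Cyc f v).card :=
  Finset.card_lt_card ⟨H.cyc_subset, fun hsub => H.m_not_mem (hsub H.hm)⟩

lemma v_not_mem' : v ∉ Cyc f' m := by
  intro hx
  exact H.v_not_per (mem_Cyc.1 hx).2

lemma h_lt_v (hvC : ∀ x ∈ Cyc f v, x < v) : h < v := by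
  have := H.stretch_mem 0
  simpa using hvC _ this

lemma h_le_m : h ≤ m := H.hmax _ (by simpa using H.stretch_mem 0)

lemma cyc_valid (hvC : ∀ x ∈ Cyc f v, x < v) : ∀ x ∈ Cyc f' m, x < m := by
  intro x hx
  have hle := H.hmax x (H.cyc_subset hx)
  exact lt_of_le_of_ne hle (mem_Cyc.1 hx).1

end StepH
end Step

noncomputable def Phi (f : Fin N → Fin N) (v : Fin N) : Fin N → Fin N :=
  if hc : f v = v ∧ (Cyc f v).Nonempty then
    Phi (Function.update (Function.update f ((Cyc f v).max' hc.2) ((Cyc f v).max' hc.2)) v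
      (f ((Cyc f v).max' hc.2))) ((Cyc f v).max' hc.2)
  else f
termination_by (Cyc f v).card
decreasing_by
  exact StepH.card_lt ⟨hc.1, Finset.max'_mem _ hc.2, fun x hx => Finset.le_max' _ x hx, rfl, rfl⟩

lemma Phi_pos {f : Fin N → Fin N} {v m : Fin N} (hv : f v = v) (hne : (Cyc f v).Nonempty)
    (hm : (Cyc f v).max' hne = m) :
    Phi f v = Phi (Function.update (Function.update f m m) v (f m)) m := by
  rw [Phi, dif_pos ⟨hv, hne⟩]
  subst hm
  rfl

lemma Phi_neg {f : Fin N → Fin N} {v : Fin N} (hne : ¬ (Cyc f v).Nonempty) :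
    Phi f v = f := by
  rw [Phi]
  rw [dif_neg]
  tauto

noncomputable def Psi (t : Fin N → Fin N) (v : Fin N) : Fin N → Fin N :=
  if hvr : t v = v then t
  else
    if hc : (Orb t ((Orb t (t v)).max' ⟨t v, self_mem_Orb⟩)).card < (Orb t v).card then
      Function.update (Psi t ((Orb t (t v)).max' ⟨t v, self_mem_Orb⟩))
        ((Orb t (t v)).max' ⟨t v, self_mem_Orb⟩) (t v)
    else t
termination_by (Orb t v).card

lemma Psi_base {t : Fin N → Fin N} {v : Fin N} (hv : t v = v) : Psi t v = t := by
  rw [Psi, dif_pos hv]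

lemma Psi_step {t : Fin N → Fin N} {v m : Fin N} (hv : t v ≠ v)
    (hm : (Orb t (t v)).max' ⟨t v, self_mem_Orb⟩ = m)
    (hc : (Orb t m).card < (Orb t v).card) :
    Psi t v = Function.update (Psi t m) m (t v) := by
  rw [Psi, dif_neg hv]
  subst hm
  rw [dif_pos hc]

lemma Psi_stuck {t : Fin N → Fin N} {v m : Fin N} (hv : t v ≠ v)
    (hm : (Orb t (t v)).max' ⟨t v, self_mem_Orb⟩ = m)
    (hc : ¬ (Orb t m).card < (Orb t v).card) :
    Psi t v = t := by
  rw [Psi, dif_neg hv]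
  subst hm
  rw [dif_neg hc]

/-- Psi only modifies positions inside the orbit of (t v) -/
lemma Psi_locality : ∀ (c : ℕ) (t : Fin N → Fin N) (v : Fin N), (Orb t v).card = c →
    ∀ x, x ∉ Orb t (t v) → Psi t v x = t x := by
  intro c
  induction c using Nat.strong_induction_on with
  | _ c ih =>
    intro t v hcard x hx
    by_cases hv : t v = v
    · rw [Psi_base hv]
    · set m := (Orb t (t v)).max' ⟨t v, self_mem_Orb⟩ with hm
      have hmmem : m ∈ Orb t (t v) := Finset.max'_mem _ _
      by_cases hc : (Orb t m).card < (Orb t v).card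
      · rw [Psi_step hv hm.symm hc]
        have hxm : x ≠ m := fun hxm => hx (hxm ▸ hmmem)
        rw [Function.update_of_ne hxm]
        refine ih _ (hcard ▸ hc) t m rfl x ?_
        intro hmem
        exact hx (Orb_subset_of_mem hmmem (Orb_subset_of_mem apply_mem_Orb hmem))
      · rw [Psi_stuck hv hm.symm hc]

lemma phi_main : ∀ (c : ℕ) (f : Fin N → Fin N) (v : Fin N), (Cyc f v).card = c →
    f v = v → (∀ x ∈ Cyc f v, x < v) →
    IsTreeMap (Phi f v) ∧
    (∀ x, Phi f v x = f x ∨ (Phi f v x ≤ x ∧ f x ≤ x)) ∧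
    (∀ x, x ≠ v → x ∉ Cyc f v → Phi f v x = f x) ∧
    (∀ x ∈ Orb (Phi f v) v, x ≤ v) ∧
    Psi (Phi f v) v = Function.update f v (Phi f v v) := by
  intro c
  induction c using Nat.strong_induction_on with
  | _ c ih =>
    intro f v hcard hv hvC
    by_cases hne : (Cyc f v).Nonempty
    case neg =>
      have hC : Cyc f v = ∅ := Finset.not_nonempty_iff_eq_empty.1 hne
      rw [Phi_neg hne]
      refine ⟨⟨v, hv, fun i => ?_⟩, fun x => Or.inl rfl, fun x _ _ => rfl, ?_, ?_⟩
      · obtain ⟨k, c', hc', hper⟩ := exists_reach_periodic f i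
        refine ⟨k, ?_⟩
        by_contra hne'
        have : f^[k] i ∈ Cyc f v := mem_Cyc.2 ⟨hne', c', hc', hper⟩
        rw [hC] at this
        exact absurd this (Finset.notMem_empty _)
      · intro x hx
        obtain ⟨k, hk⟩ := mem_Orb.1 hx
        rw [Function.iterate_fixed hv] at hk
        exact hk ▸ le_rfl
      · rw [Psi_base hv]
        exact (Function.update_eq_self _ _).symm
    case pos =>
      set m := (Cyc f v).max' hne with hmdef
      have H : StepH f (Function.update (Function.update f m m) v (f m)) v m (f m) :=
        ⟨hv, Finset.max'_mem _ _, fun x hx => Finset.le_max' _ x hx, rfl, rfl⟩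
      set h := f m with hhdef
      set f' := Function.update (Function.update f m m) v h with hf'def
      have hPhi : Phi f v = Phi f' m := Phi_pos hv hne rfl
      obtain ⟨A_ih, B_ih, E_ih, F_ih, C_ih⟩ :=
        ih _ (hcard ▸ H.card_lt) f' m rfl H.f'_m (H.cyc_valid hvC)
      set T := Phi f' m with hTdef
      have hmv : m < v := hvC m H.hm
      have hhv : h < v := H.h_lt_v hvC
      have hhm : h ≤ m := H.h_le_m
      have hTv : T v = h := by
        rw [E_ih v H.m_ne_v.symm H.v_not_mem']
        exact H.f'_v
      have hTstretch : ∀ j ≤ H.K, T^[j] h = f^[j] h := by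
        intro j hj
        induction j with
        | zero => rfl
        | succ i ihs =>
          rw [Function.iterate_succ_apply', Function.iterate_succ_apply',
            ihs (Nat.le_of_succ_le hj),
            E_ih _ (H.hK_min i (Nat.lt_of_succ_le hj))
              (H.stretch_not_mem i (Nat.le_of_succ_le hj)),
            H.f'_other (H.stretch_ne_v i) (H.hK_min i (Nat.lt_of_succ_le hj))]
      have hTKm : T^[H.K] h = m := (hTstretch _ le_rfl).trans H.hK
      have hOrbTh : ∀ y ∈ Orb T h, y ≤ m := by
        intro y hy
        obtain ⟨i, hi⟩ := mem_Orb.1 hy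
        rcases le_or_gt i H.K with hle | hlt
        · rw [hTstretch i hle] at hi
          exact hi ▸ H.hmax _ (H.stretch_mem i)
        · obtain ⟨d, rfl⟩ : ∃ d, i = d + H.K := ⟨i - H.K, by omega⟩
          rw [Function.iterate_add_apply, hTKm] at hi
          exact F_ih y (mem_Orb.2 ⟨d, hi⟩)
      have hmOrbTv : m ∈ Orb T v := by
        refine mem_Orb.2 ⟨H.K + 1, ?_⟩
        rw [Function.iterate_succ_apply, hTv, hTKm]
      rw [hPhi]
      refine ⟨A_ih, ?_, ?_, ?_, ?_⟩
      · intro x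
        by_cases hxv : x = v
        · right
          rw [hxv, hTv, hv]
          exact ⟨hhv.le, le_rfl⟩
        by_cases hxm : x = m
        · right
          refine ⟨?_, by rw [hxm]; exact hhm⟩
          rcases B_ih x with hb | hb
          · rw [hb, hxm, H.f'_m]
          · exact hxm ▸ hb.1
        · rw [← H.f'_other hxv hxm]
          exact B_ih x
      · intro x hxv hxC
        have hxm : x ≠ m := fun e => hxC (e ▸ H.hm)
        rw [E_ih x hxm (fun hmem => hxC (H.cyc_subset hmem))]
        exact H.f'_other hxv hxm
      · intro x hx
        obtain ⟨i, hi⟩ := mem_Orb.1 hx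
        cases i with
        | zero => exact hi ▸ le_rfl
        | succ j =>
          rw [Function.iterate_succ_apply, hTv] at hi
          exact le_trans (hOrbTh x (mem_Orb.2 ⟨j, hi⟩)) hmv.le
      · have hTvne : T v ≠ v := by rw [hTv]; exact hhv.ne
        have hmax' : (Orb T (T v)).max' ⟨T v, self_mem_Orb⟩ = m := by
          apply le_antisymm
          · apply Finset.max'_le
            intro y hy
            rw [hTv] at hy
            exact hOrbTh y hy
          · apply Finset.le_max'
            rw [hTv]
            exact mem_Orb.2 ⟨H.K, hTKm⟩
        have hguard : (Orb T m).card < (Orb T v).card := by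
          apply Finset.card_lt_card
          refine ⟨Orb_subset_of_mem hmOrbTv, fun hsub => ?_⟩
          have hvm : v ∈ Orb T m := hsub self_mem_Orb
          exact absurd (F_ih v hvm) (not_le.2 hmv)
        rw [Psi_step hTvne hmax' hguard, C_ih, Function.update_idem, hTv]
        funext x
        by_cases hxm : x = m
        · rw [hxm, Function.update_self, Function.update_of_ne H.m_ne_v]
        by_cases hxv : x = v
        · rw [hxv, Function.update_of_ne H.m_ne_v.symm, Function.update_self, H.f'_v]
        · rw [Function.update_of_ne hxm, Function.update_of_ne hxv]
          exact H.f'_other hxv hxm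

lemma tree_fixed_eq_root {t : Fin N → Fin N} (ht : IsTreeMap t) {x r : Fin N}
    (hr : t r = r) (hall : ∀ i, ∃ k, t^[k] i = r) (hx : t x = x) : x = r := by
  obtain ⟨k, hk⟩ := hall x
  rw [Function.iterate_fixed hx] at hk
  exact hk

lemma tree_periodic_fixed {t : Fin N → Fin N} (ht : IsTreeMap t) {x : Fin N} {c : ℕ}
    (hc : 0 < c) (hx : t^[c] x = x) : t x = x := by
  obtain ⟨r, hr, hall⟩ := ht
  obtain ⟨k, hk⟩ := hall x
  have := periodic_reach_fixed hr ⟨c, hc, hx⟩ hk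
  rw [this, hr]

lemma psi_main : ∀ (c : ℕ) (t : Fin N → Fin N) (v : Fin N), (Orb t v).card = c →
    IsTreeMap t → (t v = v ∨ ∀ x ∈ Orb t (t v), x < v) →
    Cyc (Function.update (Psi t v) v v) v ⊆ Orb t (t v) ∧
    Phi (Function.update (Psi t v) v v) v = t := by
  intro c
  induction c using Nat.strong_induction_on with
  | _ c ih =>
    intro t v hcard ht hGood
    obtain ⟨r, hr, hall⟩ := id ht
    by_cases hv : t v = v
    case pos =>
      rw [Psi_base hv]
      have hf : Function.update t v v = t := by
        funext x
        by_cases hx : x = v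
        · rw [hx, Function.update_self, hv]
        · rw [Function.update_of_ne hx]
      rw [hf]
      have hC : Cyc t v = ∅ := by
        rw [Finset.eq_empty_iff_forall_notMem]
        intro x hx
        obtain ⟨hxv, c', hc', hcx⟩ := mem_Cyc.1 hx
        have hxfix := tree_periodic_fixed ht hc' hcx
        exact hxv ((tree_fixed_eq_root ht hr hall hxfix).trans
          (tree_fixed_eq_root ht hr hall hv).symm)
      refine ⟨by rw [hC]; exact Finset.empty_subset _, ?_⟩
      exact Phi_neg (by rw [hC]; exact Finset.not_nonempty_empty)
    case neg =>
      have hGood' : ∀ x ∈ Orb t (t v), x < v := hGood.resolve_left hv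
      set h := t v with hhdef
      set m := (Orb t h).max' ⟨h, self_mem_Orb⟩ with hmdef
      have hmmem : m ∈ Orb t h := Finset.max'_mem _ _
      have hmax : ∀ y ∈ Orb t h, y ≤ m := fun y hy => Finset.le_max' _ y hy
      have hmv : m < v := hGood' m hmmem
      have hhv : h < v := hGood' h self_mem_Orb
      have hOrbh_sub_v : Orb t m ⊆ Orb t h := Orb_subset_of_mem hmmem
      -- minimal travel time from h to m
      have hex : ∃ k, t^[k] h = m := mem_Orb.1 hmmem
      set K := Nat.find hex with hKdef
      have hK : t^[K] h = m := Nat.find_spec hex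
      have hKmin : ∀ j < K, t^[j] h ≠ m := fun j hj => Nat.find_min hex hj
      -- tree-path distinctness: the stretch avoids Orb t (t m)
      have hstretch_avoid : ∀ j < K, t^[j] h ∉ Orb t (t m) := by
        intro j hj hymem
        obtain ⟨i, hi⟩ := mem_Orb.1 hymem
        have h1 : t^[K - j] (t^[j] h) = m := by
          rw [← Function.iterate_add_apply, Nat.sub_add_cancel hj.le]
          exact hK
        have hper : t^[(K - j) + (i + 1)] m = m := by
          rw [Function.iterate_add_apply]
          rw [Function.iterate_succ_apply, hi, h1]
        have hfix : t m = m := tree_periodic_fixed ht (by omega) hper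
        rw [hfix] at hi
        rw [Function.iterate_fixed hfix] at hi
        exact hKmin j hj hi.symm
      have hOrbtm_sub : Orb t (t m) ⊆ Orb t h :=
        fun x hx => hOrbh_sub_v (Orb_subset_of_mem apply_mem_Orb hx)
      have hv_not_tm : v ∉ Orb t (t m) := fun hx => absurd (hGood' v (hOrbtm_sub hx)) (lt_irrefl v)
      -- Good (t, m)
      have hGoodm : t m = m ∨ ∀ x ∈ Orb t (t m), x < m := by
        by_cases htm : t m = m
        · exact Or.inl htm
        · refine Or.inr fun x hx => ?_
          refine lt_of_le_of_ne (hmax x (hOrbtm_sub hx)) fun hxm => ?_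
          obtain ⟨i, hi⟩ := mem_Orb.1 hx
          rw [hxm] at hi
          exact htm (tree_periodic_fixed ht (Nat.succ_pos i)
            (by rw [Function.iterate_succ_apply]; exact hi))
      have hmOrbv : m ∈ Orb t v := Orb_subset_of_mem apply_mem_Orb hmmem
      have hcardlt : (Orb t m).card < (Orb t v).card := by
        apply Finset.card_lt_card
        refine ⟨Orb_subset_of_mem hmOrbv, fun hsub => ?_⟩
        exact absurd (hGood' v (hOrbh_sub_v (hsub self_mem_Orb))) (lt_irrefl v)
      have hPsi : Psi t v = Function.update (Psi t m) m h :=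
        Psi_step hv (by rw [← hhdef]) hcardlt
      obtain ⟨IH_sub, IH_phi⟩ := ih _ (hcard ▸ hcardlt) t m rfl ht hGoodm
      set u := Psi t m with hudef
      set g := Function.update u m m with hgdef
      have hloc : ∀ x, x ∉ Orb t (t m) → u x = t x :=
        fun x hx => Psi_locality _ t m rfl x hx
      set f := Function.update (Psi t v) v v with hfdef
      have hfeq : f = Function.update (Function.update u m h) v v := by rw [hfdef, hPsi]
      have hfv : f v = v := by rw [hfeq]; exact Function.update_self _ _ _
      have hfm : f m = h := by
        rw [hfeq, Function.update_of_ne hmv.ne, Function.update_self]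
      have hgv : g v = h := by
        rw [hgdef, Function.update_of_ne hmv.ne']
        exact hloc v hv_not_tm
      -- stretch iterates of f
      have hfstretch : ∀ j ≤ K, f^[j] h = t^[j] h := by
        intro j hj
        induction j with
        | zero => rfl
        | succ i ihs =>
          rw [Function.iterate_succ_apply', Function.iterate_succ_apply',
            ihs (Nat.le_of_succ_le hj)]
          have h1 : t^[i] h ≠ v := (hGood' _ (mem_Orb.2 ⟨i, rfl⟩)).ne
          have h2 : t^[i] h ≠ m := hKmin i (Nat.lt_of_succ_le hj)
          rw [hfeq, Function.update_of_ne h1, Function.update_of_ne h2]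
          exact hloc _ (hstretch_avoid i (Nat.lt_of_succ_le hj))
      have hfper : f^[K + 1] m = m := by
        rw [Function.iterate_succ_apply, hfm, hfstretch K le_rfl]
        exact hK
      have hmCyc : m ∈ Cyc f v := mem_Cyc.2 ⟨hmv.ne, K + 1, Nat.succ_pos K, hfper⟩
      -- orbit of m under f stays in {m} ∪ stretch
      have hfm_orbit : ∀ s, f^[s] m = m ∨ f^[s] m ∈ Orb t h := by
        intro s
        have hmod : f^[s] m = f^[s % (K + 1)] m := by
          conv_lhs => rw [show s = s % (K + 1) + (K + 1) * (s / (K + 1)) from (Nat.mod_add_div s (K + 1)).symm]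
          rw [Function.iterate_add_apply]
          congr 1
          rw [Function.iterate_mul]
          exact Function.iterate_fixed hfper _
        rcases Nat.eq_zero_or_pos (s % (K + 1)) with h0 | hpos
        · rw [hmod, h0]; exact Or.inl rfl
        · right
          rw [hmod]
          obtain ⟨j, hj⟩ : ∃ j, s % (K + 1) = j + 1 := ⟨s % (K + 1) - 1, by omega⟩
          have hjK : j ≤ K := by
            have := Nat.mod_lt s (y := K + 1) (by omega)
            omega
          rw [hj, Function.iterate_succ_apply, hfm, hfstretch j hjK]
          exact mem_Orb.2 ⟨j, rfl⟩
      -- the cycles of f are inside Orb t h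
      have hCycSub : Cyc f v ⊆ Orb t h := by
        intro x hx
        obtain ⟨hxv, c', hc', hcx⟩ := mem_Cyc.1 hx
        by_cases hreach : ∃ s, f^[s] x = m
        · obtain ⟨s, hs⟩ := hreach
          have hx_in_orb_m : ∃ d, f^[d] m = x := by
            obtain ⟨q, hq⟩ : ∃ q, s ≤ c' * q := ⟨s, Nat.le_mul_of_pos_left s hc'⟩
            refine ⟨c' * q - s, ?_⟩
            rw [← hs, ← Function.iterate_add_apply, Nat.sub_add_cancel hq]
            rw [Function.iterate_mul]
            exact Function.iterate_fixed hcx q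
          obtain ⟨d, hd⟩ := hx_in_orb_m
          rcases hfm_orbit d with hcase | hcase
          · rw [hd] at hcase
            rw [hcase]
            exact hmmem
          · rw [hd] at hcase
            exact hcase
        · push_neg at hreach
          have hnov : ∀ s, f^[s] x ≠ v := by
            intro s hs
            exact hxv (periodic_reach_fixed hfv ⟨c', hc', hcx⟩ hs)
          have hfg : ∀ y, y ≠ v → y ≠ m → f y = g y := by
            intro y h1 h2
            rw [hfeq, hgdef, Function.update_of_ne h1, Function.update_of_ne h2,
              Function.update_of_ne h2]
          have hiter : ∀ j, f^[j] x = g^[j] x := by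
            intro j
            induction j with
            | zero => rfl
            | succ i ihs =>
              rw [Function.iterate_succ_apply', Function.iterate_succ_apply', ← ihs]
              exact hfg _ (hnov i) (hreach i)
          have : x ∈ Cyc g m := mem_Cyc.2 ⟨by simpa using hreach 0, c', hc', by
            rw [← hiter c']; exact hcx⟩
          exact hOrbtm_sub (IH_sub this)
      have hne' : (Cyc f v).Nonempty := ⟨m, hmCyc⟩
      have hCmax : (Cyc f v).max' hne' = m :=
        le_antisymm (Finset.max'_le _ _ _ fun y hy => hmax y (hCycSub hy))
          (Finset.le_max' _ _ hmCyc)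
      have hPhi1 : Phi f v = Phi (Function.update (Function.update f m m) v (f m)) m :=
        Phi_pos hfv hne' hCmax
      have hfstar : Function.update (Function.update f m m) v (f m) = g := by
        funext x
        by_cases hxv : x = v
        · rw [hxv, Function.update_self, hfm, hgv]
        by_cases hxm : x = m
        · rw [hxm, Function.update_of_ne (hxm ▸ hmv.ne), Function.update_self,
            hgdef, Function.update_self]
        · rw [Function.update_of_ne hxv, Function.update_of_ne hxm, hfeq, hgdef,
            Function.update_of_ne hxv, Function.update_of_ne hxm,
            Function.update_of_ne hxm]
      constructor
      · exact hCycSub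
      · rw [hPhi1, hfstar, IH_phi]

lemma numRuns_congr {f g : Fin N → Fin N}
    (hp : ∀ x, f x = g x ∨ (f x ≤ x ∧ g x ≤ x)) : numRuns f = numRuns g := by
  unfold numRuns
  congr 1
  apply Finset.filter_congr
  intro j _
  constructor
  · intro H i hgi
    rcases hp i with heq | ⟨h1, h2⟩
    · exact H i (heq.trans hgi)
    · exact hgi ▸ h2
  · intro H i hfi
    rcases hp i with heq | ⟨h1, h2⟩
    · exact H i (heq.symm.trans hfi)
    · exact hfi ▸ h1

section Wrap
variable {n : ℕ}

noncomputable def PhiHat (f : Fin (n+1) → Fin (n+1)) : Fin (n+1) → Fin (n+1) :=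
  Phi (Function.update f (Fin.last n) (Fin.last n)) (Fin.last n)

noncomputable def PsiHat (t : Fin (n+1) → Fin (n+1)) : Fin (n+1) → Fin (n+1) :=
  Function.update (Psi t (Fin.last n)) (Fin.last n) (Fin.last n)

lemma wrap_main (f : Fin (n+1) → Fin (n+1)) :
    IsTreeMap (PhiHat f) ∧ numRuns (PhiHat f) = numRuns f ∧
    PsiHat (PhiHat f) = Function.update f (Fin.last n) (Fin.last n) := by
  set L := Fin.last n with hL
  set f₀ := Function.update f L L with hf₀
  have hv : f₀ L = L := Function.update_self _ _ _
  have hvC : ∀ x ∈ Cyc f₀ L, x < L := by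
    intro x hx
    exact lt_of_le_of_ne (Fin.le_last x) (mem_Cyc.1 hx).1
  obtain ⟨hA, hB, hE, hF, hC⟩ := phi_main _ f₀ L rfl hv hvC
  refine ⟨hA, ?_, ?_⟩
  · have h1 : numRuns (Phi f₀ L) = numRuns f₀ := numRuns_congr hB
    have h2 : numRuns f₀ = numRuns f := by
      apply numRuns_congr
      intro x
      by_cases hx : x = L
      · right
        refine ⟨?_, ?_⟩
        · rw [hx, hv]
        · rw [hx]
          exact Fin.le_last _
      · left
        rw [hf₀, Function.update_of_ne hx]
    exact h1.trans h2
  · show Function.update (Psi (Phi f₀ L) L) L L = f₀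
    rw [hC, Function.update_idem, Function.update_idem]

lemma wrap_tree (t : Fin (n+1) → Fin (n+1)) (ht : IsTreeMap t) :
    PhiHat (PsiHat t) = t := by
  set L := Fin.last n with hL
  have hGood : t L = L ∨ ∀ x ∈ Orb t (t L), x < L := by
    by_cases htL : t L = L
    · exact Or.inl htL
    · refine Or.inr fun x hx => ?_
      refine lt_of_le_of_ne (Fin.le_last x) fun hxL => ?_
      obtain ⟨i, hi⟩ := mem_Orb.1 hx
      rw [hxL] at hi
      exact htL (tree_periodic_fixed ht (Nat.succ_pos i)
        (by rw [Function.iterate_succ_apply]; exact hi))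
  obtain ⟨_, hphi⟩ := psi_main _ t L rfl ht hGood
  show Phi (Function.update (PsiHat t) L L) L = t
  have : Function.update (PsiHat t) L L = Function.update (Psi t L) L L := by
    rw [PsiHat, Function.update_idem]
  rw [this]
  exact hphi

noncomputable def mainEquiv :
    (Fin (n+1) → Fin (n+1)) ≃ (Fin (n+1) × {t : Fin (n+1) → Fin (n+1) // IsTreeMap t}) where
  toFun f := (f (Fin.last n), ⟨PhiHat f, (wrap_main f).1⟩)
  invFun p := Function.update (PsiHat p.2.1) (Fin.last n) p.1
  left_inv f := by
    show Function.update (PsiHat (PhiHat f)) (Fin.last n) (f (Fin.last n)) = f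
    rw [(wrap_main f).2.2, Function.update_idem]
    exact Function.update_eq_self _ _
  right_inv p := by
    obtain ⟨c, t, ht⟩ := p
    have h2 : Function.update (PsiHat t) (Fin.last n) (Fin.last n) = PsiHat t := by
      rw [PsiHat, Function.update_idem]
    have hkey : PhiHat (Function.update (PsiHat t) (Fin.last n) c) = t := by
      show Phi (Function.update (Function.update (PsiHat t) (Fin.last n) c)
        (Fin.last n) (Fin.last n)) (Fin.last n) = t
      rw [Function.update_idem, h2]
      have h3 := wrap_tree t ht
      rw [PhiHat, h2] at h3
      exact h3
    refine Prod.ext ?_ (Subtype.ext ?_)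
    · exact Function.update_self _ _ _
    · exact hkey

noncomputable def runEquiv (n m : ℕ) :
    {f : Fin (n+1) → Fin (n+1) // numRuns f = m} ≃
      (Fin (n+1) × {f : Fin (n+1) → Fin (n+1) // IsTreeMap f ∧ numRuns f = m}) := by
  have e1 : {f : Fin (n+1) → Fin (n+1) // numRuns f = m} ≃
      {p : Fin (n+1) × {t : Fin (n+1) → Fin (n+1) // IsTreeMap t} // numRuns p.2.1 = m} :=
    Equiv.subtypeEquiv mainEquiv (fun f => by
      show numRuns f = m ↔ numRuns (PhiHat f) = m
      rw [(wrap_main f).2.1])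
  have e2 : {p : Fin (n+1) × {t : Fin (n+1) → Fin (n+1) // IsTreeMap t} // numRuns p.2.1 = m} ≃
      (Fin (n+1) × {t' : {t : Fin (n+1) → Fin (n+1) // IsTreeMap t} // numRuns t'.1 = m}) :=
    { toFun := fun p => (p.1.1, ⟨p.1.2, p.2⟩)
      invFun := fun q => ⟨(q.1, q.2.1), q.2.2⟩
      left_inv := fun p => rfl
      right_inv := fun q => rfl }
  exact e1.trans (e2.trans (Equiv.prodCongr (Equiv.refl _)
    (Equiv.subtypeSubtypeEquivSubtypeInter (fun t : Fin (n+1) → Fin (n+1) => IsTreeMap t) (fun t => numRuns t = m))))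

end Wrap

end RunsProof


/-- For every `n ≥ 1` and every `m`, `R_{n,m} = n · F_{n,m}`. -/
theorem mappingRunCount_eq_n_mul_treeRunCount (n m : ℕ) (hn : 1 ≤ n) :
    mappingRunCount n m = n * treeRunCount n m := by
  obtain ⟨k, rfl⟩ : ∃ k, n = k + 1 := ⟨n - 1, by omega⟩
  unfold mappingRunCount treeRunCount
  rw [Nat.card_congr (RunsProof.runEquiv k m), Nat.card_prod,
    Nat.card_eq_fintype_card (α := Fin (k+1)), Fintype.card_fin]
end
end

section
/- For every n ≥ 1 and every m ≥ 1, the number R_{n,m} of functions f : Fin n → Fin n with exactly m ascending runs equals n^{\underline m} · S(n,m) = (n!/(n−m)!) · S(n,m), the falling factorial n(n−1)⋯(n−m+1) times the Stirling number of the second kind S(n,m). -/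
/-- The Stirling number of the second kind `S(n,m)`: the number of partitions of
an `n`-element set into `m` nonempty blocks. -/
noncomputable def stirlingSecond (n m : ℕ) : ℕ :=
  Nat.card {P : Finpartition (Finset.univ : Finset (Fin n)) // P.parts.card = m}

/-!
Fix the set `A` of run starts, `#A = m`. For maps `Fin p → Fin c` whose run starts below `p`
form `A`, the last value is free (`c` choices), while the value `p` must be avoided by the
earlier values if `p ∈ A` and hit otherwise. Maps avoiding `p` are maps into `Fin (c - 1)`
(through `succAbove`), and those hitting `p` are all maps minus the avoiding ones; induction on
`p` then gives `c^{\underline m} · ∏_{b ∉ A} #{a ∈ A | a < b}` such maps. On the other side,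
sending every element to the minimum of its block identifies a partition whose blocks have
minima `A` with a choice, for every `b ∉ A`, of some `a ∈ A` below `b`; so `S(n, m)` is the sum
of the same products over all `m`-sets `A`.
-/

open Finset

lemma Nat.add_one_mul_descFactorial_add_mul {c k : ℕ} (hk : k ≤ c + 1) :
    (c + 1) * c.descFactorial k + k * (c + 1).descFactorial k =
      (c + 1) * (c + 1).descFactorial k := by
  rw [← Nat.succ_descFactorial, ← add_mul, Nat.sub_add_cancel hk]

section LowerProd

variable {α β : Type*} [LinearOrder α] [LinearOrder β]

def lowerProd (s A : Finset α) : ℕ := ∏ b ∈ s \ A, #{a ∈ A | a < b}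

lemma lowerProd_map (f : α ↪o β) (s A : Finset α) :
    lowerProd (s.map f.toEmbedding) (A.map f.toEmbedding) = lowerProd s A := by
  rw [lowerProd, ← Finset.map_sdiff, prod_map]
  refine prod_congr rfl fun b _ => ?_
  simp [filter_map]

variable {s A : Finset α} {x : α}

lemma lowerProd_insert_insert (hs : ∀ b ∈ s, b < x) :
    lowerProd (insert x s) (insert x A) = lowerProd s A := by
  have hx : x ∉ s := fun h => (hs x h).false
  rw [lowerProd, insert_sdiff_insert, sdiff_insert_of_notMem hx]
  refine prod_congr rfl fun b hb => ?_
  rw [filter_insert, if_neg (hs b (mem_sdiff.1 hb).1).asymm]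

lemma lowerProd_insert (hs : ∀ b ∈ s, b < x) (hA : A ⊆ s) :
    lowerProd (insert x s) A = lowerProd s A * #A := by
  have hx : x ∉ s := fun h => (hs x h).false
  rw [lowerProd, insert_sdiff_of_notMem _ (fun h => hx (hA h)), prod_insert (by simp [hx]),
    filter_true_of_mem (fun a ha => hs a (hA ha)), mul_comm]
  rfl

lemma sum_powersetCard_fin_lowerProd (n m : ℕ) :
    ∑ B ∈ powersetCard m (univ : Finset (Fin n)), lowerProd univ B =
      ∑ A ∈ powersetCard m (range n), lowerProd (range n) A := by
  rw [← Nat.Iio_eq_range, ← Fin.map_valEmbedding_univ, powersetCard_map, sum_map]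
  exact sum_congr rfl fun B _ => (lowerProd_map (Fin.valOrderEmb n) univ B).symm

end LowerProd

section RunStarts

variable {p c : ℕ} {A : Finset ℕ}

lemma card_filter_init {β : Type*} [Fintype β] (Q : (Fin p → β) → Prop) [DecidablePred Q] :
    #{f : Fin (p + 1) → β | Q (Fin.init f)} = Fintype.card β * #{g | Q g} := by
  rw [← card_univ, ← card_product]
  refine card_equiv (Fin.snocEquiv fun _ => β).symm fun f => ?_
  simp [Fin.snocEquiv]

/-- Only values below `p` are recorded, as natural numbers, so that run starts of maps with
different codomains can be compared. -/
def runStarts (g : Fin p → Fin c) : Finset ℕ :=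
  {j ∈ range p | ∀ i, (g i : ℕ) = j → j ≤ i}

lemma runStarts_subset_range (g : Fin p → Fin c) : runStarts g ⊆ range p :=
  filter_subset _ _

lemma numRuns_eq_card_runStarts {n : ℕ} (f : Fin n → Fin n) : numRuns f = #(runStarts f) := by
  rw [numRuns, ← card_map Fin.valEmbedding]
  congr 1
  ext j
  simp only [runStarts, mem_map, mem_filter, mem_univ, true_and, Fin.valEmbedding_apply, mem_range]
  constructor
  · rintro ⟨j, hj, rfl⟩
    exact ⟨j.isLt, fun i hi => hj i (Fin.ext hi)⟩
  · rintro ⟨hjn, hj⟩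
    exact ⟨⟨j, hjn⟩, fun i hi => hj i (congrArg Fin.val hi), rfl⟩

lemma mem_runStarts_iff_init (f : Fin (p + 1) → Fin c) (j : ℕ) :
    j ∈ runStarts f ↔ j ≤ p ∧ ∀ i : Fin p, (Fin.init f i : ℕ) = j → j ≤ i := by
  simp only [runStarts, mem_filter, mem_range, Fin.forall_fin_succ', Fin.init, Fin.val_last,
    Fin.val_castSucc, Nat.lt_succ_iff]
  exact ⟨fun ⟨hj, h, _⟩ => ⟨hj, h⟩, fun ⟨hj, h⟩ => ⟨hj, h, fun _ => hj⟩⟩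

lemma runStarts_eq_init (f : Fin (p + 1) → Fin c) :
    runStarts f = if ∃ i, (Fin.init f i : ℕ) = p then runStarts (Fin.init f)
      else insert p (runStarts (Fin.init f)) := by
  ext j
  rw [mem_runStarts_iff_init]
  split_ifs with hit
  · simp only [runStarts, mem_filter, mem_range]
    obtain ⟨k, hk⟩ := hit
    constructor
    · rintro ⟨hj, hi⟩
      refine ⟨lt_of_le_of_ne hj ?_, hi⟩
      rintro rfl
      exact absurd (hi k hk) (by omega)
    · exact fun ⟨hj, hi⟩ => ⟨hj.le, hi⟩
  · simp only [runStarts, mem_insert, mem_filter, mem_range]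
    simp only [not_exists] at hit
    constructor
    · rintro ⟨hj, hi⟩
      rcases hj.lt_or_eq with hj | rfl
      · exact Or.inr ⟨hj, hi⟩
      · exact Or.inl rfl
    · rintro (rfl | ⟨hj, hi⟩)
      · exact ⟨le_rfl, fun i hi => absurd hi (hit i)⟩
      · exact ⟨hj.le, hi⟩

lemma runStarts_eq_iff_of_mem (hp : p ∈ A) (f : Fin (p + 1) → Fin c) :
    runStarts f = A ↔
      (∀ i, (Fin.init f i : ℕ) ≠ p) ∧ runStarts (Fin.init f) = A.erase p := by
  have hpf : p ∉ runStarts (Fin.init f) := fun h => by simpa using runStarts_subset_range _ h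
  rw [runStarts_eq_init]
  split_ifs with hit
  · obtain ⟨i, hi⟩ := hit
    exact iff_of_false (fun h => hpf (h ▸ hp)) fun h => h.1 i hi
  · simp only [not_exists] at hit
    simp only [hit, ne_eq, not_false_eq_true, implies_true, true_and]
    exact ⟨fun h => h ▸ (erase_insert hpf).symm, fun h => h ▸ insert_erase hp⟩

lemma runStarts_eq_iff_of_notMem (hp : p ∉ A) (f : Fin (p + 1) → Fin c) :
    runStarts f = A ↔ (∃ i, (Fin.init f i : ℕ) = p) ∧ runStarts (Fin.init f) = A := by
  rw [runStarts_eq_init]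
  split_ifs with hit
  · simp [hit]
  · exact iff_of_false (fun h => hp (h ▸ mem_insert_self _ _)) fun h => hit h.1

lemma runStarts_succAbove_comp (h : Fin p → Fin c) (q : Fin (c + 1)) (hq : p ≤ q) :
    runStarts (q.succAbove ∘ h) = runStarts h := by
  ext j
  simp only [runStarts, mem_filter, mem_range, Function.comp_apply, and_congr_right_iff]
  intro hj
  refine forall_congr' fun i => ?_
  rcases lt_or_ge (h i).castSucc q with hi | hi
  · rw [Fin.succAbove_of_castSucc_lt _ _ hi, Fin.val_castSucc]
  · rw [Fin.succAbove_of_le_castSucc _ _ hi, Fin.val_succ]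
    rw [Fin.le_def, Fin.val_castSucc] at hi
    constructor <;> intro h1 h2 <;> omega

lemma card_filter_avoid_runStarts (hpc : p ≤ c) (A : Finset ℕ) :
    #{g : Fin p → Fin (c + 1) | (∀ i, (g i : ℕ) ≠ p) ∧ runStarts g = A} =
      #{h : Fin p → Fin c | runStarts h = A} := by
  let q : Fin (c + 1) := ⟨p, by omega⟩
  have hq : p ≤ q := le_rfl
  symm
  refine card_bij (fun h _ => q.succAbove ∘ h) (fun h hh => ?_) (fun h₁ _ h₂ _ e => ?_)
    (fun g hg => ?_)
  · simp only [mem_filter, mem_univ, true_and] at hh ⊢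
    exact ⟨fun i => Fin.val_ne_of_ne (Fin.succAbove_ne q (h i)),
      (runStarts_succAbove_comp h q hq).trans hh⟩
  · exact funext fun i => q.succAbove_right_injective (congrFun e i)
  · simp only [mem_filter, mem_univ, true_and] at hg ⊢
    choose h hh using fun i =>
      Fin.exists_succAbove_eq (x := g i) (y := q) (Fin.ne_of_val_ne (hg.1 i))
    have hg' : q.succAbove ∘ h = g := funext hh
    exact ⟨h, by rw [← runStarts_succAbove_comp h q hq, hg', hg.2], hg'⟩

lemma card_runStarts_succ_of_mem (hpc : p ≤ c) (hp : p ∈ A) :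
    #{f : Fin (p + 1) → Fin (c + 1) | runStarts f = A} =
      (c + 1) * #{h : Fin p → Fin c | runStarts h = A.erase p} := by
  simp only [runStarts_eq_iff_of_mem hp]
  rw [card_filter_init fun g : Fin p → Fin (c + 1) => (∀ i, (g i : ℕ) ≠ p) ∧
    runStarts g = A.erase p, Fintype.card_fin, card_filter_avoid_runStarts hpc]

lemma card_runStarts_succ_of_notMem (hpc : p ≤ c) (hp : p ∉ A) :
    #{f : Fin (p + 1) → Fin (c + 1) | runStarts f = A} +
      (c + 1) * #{h : Fin p → Fin c | runStarts h = A} =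
      (c + 1) * #{g : Fin p → Fin (c + 1) | runStarts g = A} := by
  simp only [runStarts_eq_iff_of_notMem hp]
  rw [card_filter_init fun g : Fin p → Fin (c + 1) =>
    (∃ i, (g i : ℕ) = p) ∧ runStarts g = A, Fintype.card_fin, ← card_filter_avoid_runStarts hpc, ← mul_add,
    ← card_filter_add_card_filter_not (s := {g | runStarts g = A})
      fun g => ∃ i, (g i : ℕ) = p]
  simp only [filter_filter, not_exists, and_comm]

theorem card_runStarts_eq (hA : A ⊆ range p) (hpc : p ≤ c) :
    #{g : Fin p → Fin c | runStarts g = A} = c.descFactorial #A * lowerProd (range p) A := by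
  induction p generalizing c A with
  | zero =>
    obtain rfl : A = ∅ := subset_empty.1 hA
    simp [runStarts, lowerProd]
  | succ p ih =>
    obtain ⟨c, rfl⟩ : ∃ c', c = c' + 1 := ⟨c - 1, by omega⟩
    have hlt : ∀ b ∈ range p, b < p := fun b => mem_range.1
    rw [range_add_one] at hA ⊢
    by_cases hp : p ∈ A
    · have hA' : A.erase p ⊆ range p :=
        (subset_insert_iff_of_notMem (notMem_erase p A)).1 ((erase_subset p A).trans hA)
      rw [card_runStarts_succ_of_mem (by omega) hp, ih hA' (by omega), ← insert_erase hp,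
        lowerProd_insert_insert hlt, card_insert_of_notMem (notMem_erase p A),
        Nat.succ_descFactorial_succ, erase_insert (notMem_erase p A), mul_assoc]
    · have hA' : A ⊆ range p := (subset_insert_iff_of_notMem hp).1 hA
      have key := card_runStarts_succ_of_notMem (c := c) (by omega) hp
      have hAc : #A ≤ c + 1 := (card_le_card hA').trans (by rw [card_range]; omega)
      have hD := congrArg (· * lowerProd (range p) A) (Nat.add_one_mul_descFactorial_add_mul hAc)
      rw [ih hA' (by omega), ih hA' (by omega)] at key
      rw [lowerProd_insert hlt hA']
      linarith

lemma mappingRunCount_eq_sum (n m : ℕ) :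
    mappingRunCount n m =
      n.descFactorial m * ∑ A ∈ powersetCard m (range n), lowerProd (range n) A := by
  rw [mappingRunCount, Nat.card_eq_fintype_card, Fintype.card_subtype,
    card_eq_sum_card_fiberwise (f := runStarts) (t := powersetCard m (range n))
      fun f hf => mem_powersetCard.2 ⟨runStarts_subset_range f,
        (numRuns_eq_card_runStarts f).symm.trans (mem_filter.1 hf).2⟩, mul_sum]
  refine sum_congr rfl fun A hA => ?_
  obtain ⟨hAn, rfl⟩ := mem_powersetCard.1 hA
  rw [← card_runStarts_eq hAn le_rfl, filter_filter]
  congr 1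
  refine filter_congr fun f _ => ⟨And.right, fun h => ⟨?_, h⟩⟩
  rw [numRuns_eq_card_runStarts, h]

end RunStarts

section RootMaps

instance Setoid.decidableRelKer {α β : Type*} [DecidableEq β] (f : α → β) :
    DecidableRel (Setoid.ker f) :=
  fun a b => decEq (f a) (f b)

variable {α : Type*} [LinearOrder α]

def IsRootMap (g : α → α) : Prop := ∀ x, g (g x) = g x ∧ g x ≤ x

variable [Fintype α]

instance : DecidablePred (IsRootMap (α := α)) := fun _ => by unfold IsRootMap; infer_instance

namespace Finpartition

variable (P : Finpartition (univ : Finset α))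

lemma parts_eq_image_part : P.parts = univ.image P.part := by
  ext t
  refine ⟨fun ht => ?_, fun ht => ?_⟩
  · obtain ⟨x, hx⟩ := P.nonempty_of_mem_parts ht
    exact mem_image.2 ⟨x, mem_univ x, P.part_eq_of_mem ht hx⟩
  · obtain ⟨x, -, rfl⟩ := mem_image.1 ht
    exact P.part_mem.2 (mem_univ x)

def rootMap (x : α) : α := (P.part x).min' (P.part_nonempty.2 (mem_univ x))

variable {P}

lemma rootMap_mem_part (x : α) : P.rootMap x ∈ P.part x := min'_mem _ _

lemma part_rootMap (x : α) : P.part (P.rootMap x) = P.part x :=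
  P.part_eq_of_mem (P.part_mem.2 (mem_univ x)) (rootMap_mem_part x)

lemma rootMap_eq_rootMap_iff {x y : α} : P.rootMap x = P.rootMap y ↔ P.part x = P.part y := by
  refine ⟨fun h => ?_, fun h => by simp only [rootMap, h]⟩
  rw [← part_rootMap x, h, part_rootMap]

lemma isRootMap_rootMap : IsRootMap P.rootMap := fun x =>
  ⟨rootMap_eq_rootMap_iff.2 (part_rootMap x), min'_le _ x (P.mem_part (mem_univ x))⟩

lemma card_image_rootMap : #(univ.image P.rootMap) = #P.parts := by
  have hpart : univ.image P.part = (univ.image P.rootMap).image P.part := by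
    rw [image_image]; simp only [Function.comp_def, part_rootMap]
  rw [parts_eq_image_part, hpart]
  refine (card_image_of_injOn ?_).symm
  simp only [Set.InjOn, coe_image, coe_univ, Set.image_univ, Set.forall_mem_range]
  intro x y h
  simpa only [part_rootMap, ← rootMap_eq_rootMap_iff] using h

end Finpartition

def finpartitionEquivRootMap :
    Finpartition (univ : Finset α) ≃ {g : α → α // IsRootMap g} where
  toFun P := ⟨P.rootMap, Finpartition.isRootMap_rootMap⟩
  invFun g := Finpartition.ofSetoid (Setoid.ker g.1)
  left_inv P := by
    ext1
    rw [Finpartition.parts_eq_image_part, P.parts_eq_image_part]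
    congr 1
    ext x y
    rw [Finpartition.mem_part_ofSetoid_iff_rel, Setoid.ker_def, Finpartition.rootMap_eq_rootMap_iff,
      P.mem_part_iff_part_eq_part (mem_univ y) (mem_univ x), eq_comm]
  right_inv g := by
    ext x
    change (Finpartition.ofSetoid (Setoid.ker g.1)).rootMap x = g.1 x
    have hmem : ∀ y, y ∈ (Finpartition.ofSetoid (Setoid.ker g.1)).part x ↔ g.1 x = g.1 y :=
      fun y => Finpartition.mem_part_ofSetoid_iff_rel
    refine le_antisymm (min'_le _ _ ((hmem _).2 (g.2 x).1.symm)) (le_min' _ _ _ fun y hy => ?_)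
    exact ((hmem y).1 hy).trans_le (g.2 y).2

lemma isRootMap_and_image_eq_iff {g : α → α} {B : Finset α} :
    IsRootMap g ∧ univ.image g = B ↔
      (∀ a ∈ B, g a = a) ∧ ∀ b ∉ B, g b ∈ B ∧ g b < b := by
  constructor
  · rintro ⟨hg, rfl⟩
    refine ⟨?_, fun b hb => ⟨mem_image_of_mem g (mem_univ b), (hg b).2.lt_of_ne ?_⟩⟩
    · simp only [mem_image, mem_univ, true_and, forall_exists_index, forall_apply_eq_imp_iff]
      exact fun x => (hg x).1
    · rintro h
      exact hb (h ▸ mem_image_of_mem g (mem_univ b))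
  · rintro ⟨hfix, hmove⟩
    have hmem : ∀ x, g x ∈ B := fun x => by
      by_cases hx : x ∈ B
      · rwa [hfix x hx]
      · exact (hmove x hx).1
    refine ⟨fun x => ⟨hfix _ (hmem x), ?_⟩, ?_⟩
    · by_cases hx : x ∈ B
      · rw [hfix x hx]
      · exact (hmove x hx).2.le
    · ext a
      refine ⟨fun ha => ?_, fun ha => mem_image.2 ⟨a, mem_univ a, hfix a ha⟩⟩
      obtain ⟨x, -, rfl⟩ := mem_image.1 ha
      exact hmem x

def retractionEquiv (B : Finset α) :
    {g : α → α // (∀ a ∈ B, g a = a) ∧ ∀ b ∉ B, g b ∈ B ∧ g b < b} ≃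
      ∀ b : {b // b ∉ B}, {a // a ∈ B ∧ a < b} where
  toFun g b := ⟨g.1 b, g.2.2 b b.2⟩
  invFun r := ⟨fun x => if hx : x ∈ B then x else r ⟨x, hx⟩,
    fun a ha => dif_pos ha, fun b hb => by simpa only [dif_neg hb] using (r ⟨b, hb⟩).2⟩
  left_inv g := by
    ext x
    by_cases hx : x ∈ B
    · simp only [dif_pos hx, g.2.1 x hx]
    · simp only [dif_neg hx]
  right_inv r := by
    ext b
    simp only [dif_neg b.2]

lemma card_isRootMap_image_eq (B : Finset α) :
    #{g | IsRootMap g ∧ univ.image g = B} = lowerProd univ B := by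
  rw [← Fintype.card_subtype, Fintype.card_congr
    ((Equiv.subtypeEquivRight fun _ => isRootMap_and_image_eq_iff).trans (retractionEquiv B)),
    Fintype.card_pi, lowerProd, ← compl_eq_univ_sdiff, prod_subtype Bᶜ fun _ => mem_compl]
  refine Fintype.prod_congr _ _ fun b => ?_
  rw [Fintype.card_subtype]
  congr 1
  ext a
  simp

theorem card_finpartition_eq_sum_lowerProd (m : ℕ) :
    Nat.card {P : Finpartition (univ : Finset α) // #P.parts = m} =
      ∑ B ∈ powersetCard m (univ : Finset α), lowerProd univ B := by
  have e : {P : Finpartition (univ : Finset α) // #P.parts = m} ≃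
      {g : α → α // IsRootMap g ∧ #(univ.image g) = m} :=
    ((finpartitionEquivRootMap (α := α)).subtypeEquiv fun P => by
      simp only [finpartitionEquivRootMap, Equiv.coe_fn_mk, P.card_image_rootMap]).trans
      (Equiv.subtypeSubtypeEquivSubtypeInter _ _)
  rw [Nat.card_congr e, Nat.card_eq_fintype_card, Fintype.card_subtype,
    card_eq_sum_card_fiberwise (f := univ.image) (t := powersetCard m univ)
      fun g hg => mem_powersetCard.2 ⟨subset_univ _, (mem_filter.1 hg).2.2⟩]
  refine sum_congr rfl fun B hB => ?_
  rw [← card_isRootMap_image_eq, filter_filter]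
  congr 1
  refine filter_congr fun g _ => ⟨fun h => ⟨h.1.1, h.2⟩, fun h => ⟨⟨h.1, ?_⟩, h.2⟩⟩
  rw [h.2, (mem_powersetCard.1 hB).2]

end RootMaps

lemma stirlingSecond_eq_sum (n m : ℕ) :
    stirlingSecond n m = ∑ A ∈ powersetCard m (range n), lowerProd (range n) A := by
  rw [stirlingSecond, card_finpartition_eq_sum_lowerProd, sum_powersetCard_fin_lowerProd]

theorem mappingRunCount_eq_descFactorial_mul_stirling_general (n m : ℕ) :
    mappingRunCount n m = n.descFactorial m * stirlingSecond n m ∧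
    mappingRunCount n m = (Nat.factorial n / Nat.factorial (n - m)) * stirlingSecond n m := by
  have h : mappingRunCount n m = n.descFactorial m * stirlingSecond n m := by
    rw [mappingRunCount_eq_sum, stirlingSecond_eq_sum]
  refine ⟨h, h.trans ?_⟩
  rcases le_or_gt m n with hmn | hmn
  · rw [Nat.descFactorial_eq_div hmn]
  · rw [stirlingSecond_eq_sum, powersetCard_eq_empty.2 (by rwa [card_range]), sum_empty,
      mul_zero, mul_zero]

/-- The number of `n`-mappings with exactly `m` ascending runs is the falling
factorial `n^{\underline{m}}` times the Stirling number `S(n,m)`,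
which also equals `(n!/(n-m)!) · S(n,m)`. -/
theorem mappingRunCount_eq_descFactorial_mul_stirling (n m : ℕ) (hn : 1 ≤ n) (hm : 1 ≤ m) :
    mappingRunCount n m = n.descFactorial m * stirlingSecond n m ∧
    mappingRunCount n m = (Nat.factorial n / Nat.factorial (n - m)) * stirlingSecond n m :=
  mappingRunCount_eq_descFactorial_mul_stirling_general n m
end

section
/- For every n ≥ 1 and every m with 1 ≤ m ≤ n, the number R_{n,m} of functions f : Fin n → Fin n with exactly m ascending runs equals the number of pairs (S, x), where S = (S_1, …, S_m) is a family of pairwise disjoint nonempty subsets of Fin n whose union is all of Fin n, ordered so that max(S_1) > max(S_2) > ⋯ > max(S_m), and x = (n_1, …, n_m) is a sequence of elements of Fin n such that for each j, n_j does not lie in the set { min { ℓ ∈ S_i : ℓ > max(S_j) } : 1 ≤ i < j } (note that for i < j each set { ℓ ∈ S_i : ℓ > max(S_j) } is nonempty since max(S_i) > max(S_j)). -/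
/-!
A run of `f` is a chain `a₁ < a₂ < ⋯ < a_k` with `f aᵢ = aᵢ₊₁` in which each `aᵢ` is the
largest preimage of `aᵢ₊₁` below it; descending along largest lower preimages from any element
ends at a run start, and this partitions `Fin n` into the runs. Hence `f` is recovered from its
runs, listed by decreasing maxima, and the images `n_j` of their maxima. Conversely, let every
block ascend and send `max S_j` to `n_j`. The runs of this map are exactly the blocks, unless
`n_j` lies in an earlier block `S_i` and `max S_j` is the largest preimage of `n_j` below it,
so that the two blocks merge; this happens precisely when `n_j` is the first element of `S_i`
above `max S_j`.
-/

open Finset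

namespace AscendingRuns

variable {α : Type*} [LinearOrder α]

def IsRunStart (f : α → α) (v : α) : Prop := ∀ i, f i = v → v ≤ i

section Runs

variable [Fintype α]

section Defs

variable (f : α → α)

instance : DecidablePred (IsRunStart f) := fun v =>
  inferInstanceAs (Decidable (∀ i, f i = v → v ≤ i))

def preimagesBelow (v : α) : Finset α := {i | i < v ∧ f i = v}

def runPred (v : α) : α :=
  if h : (preimagesBelow f v).Nonempty then (preimagesBelow f v).max' h else v

/-- The start of the run through `v`. -/
def runRoot (v : α) : α :=
  wellFounded_lt.fix (fun v rec => if h : runPred f v < v then rec (runPred f v) h else v) v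

end Defs

variable {f : α → α} {u v w : α}

lemma runPred_of_isRunStart (hv : IsRunStart f v) : runPred f v = v := by
  rw [runPred, dif_neg]
  rintro ⟨i, hi⟩
  simp only [preimagesBelow, mem_filter, mem_univ, true_and] at hi
  exact hi.1.not_ge (hv i hi.2)

lemma runPred_lt_and_apply (hv : ¬ IsRunStart f v) :
    runPred f v < v ∧ f (runPred f v) = v := by
  have hne : (preimagesBelow f v).Nonempty := by
    simp only [IsRunStart, not_forall, not_le] at hv
    obtain ⟨i, hfi, hiv⟩ := hv
    exact ⟨i, by simp [preimagesBelow, hiv, hfi]⟩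
  rw [runPred, dif_pos hne]
  simpa [preimagesBelow] using max'_mem _ hne

lemma le_runPred (hu : u < v) (hfu : f u = v) : u ≤ runPred f v := by
  have hmem : u ∈ preimagesBelow f v := by simp [preimagesBelow, hu, hfu]
  rw [runPred, dif_pos ⟨u, hmem⟩]
  exact le_max' _ _ hmem

lemma runPred_le (f : α → α) (v : α) : runPred f v ≤ v := by
  by_cases hv : IsRunStart f v
  · exact (runPred_of_isRunStart hv).le
  · exact (runPred_lt_and_apply hv).1.le

lemma runRoot_eq (f : α → α) (v : α) :
    runRoot f v = if runPred f v < v then runRoot f (runPred f v) else v := by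
  rw [runRoot, WellFounded.fix_eq]
  split_ifs <;> rfl

lemma runRoot_runPred (f : α → α) (v : α) : runRoot f (runPred f v) = runRoot f v := by
  rcases (runPred_le f v).lt_or_eq with h | h
  · rw [runRoot_eq f v, if_pos h]
  · rw [h]

lemma runRoot_of_isRunStart (hv : IsRunStart f v) : runRoot f v = v := by
  rw [runRoot_eq, if_neg (runPred_of_isRunStart hv).not_lt]

lemma runRoot_le (f : α → α) (v : α) : runRoot f v ≤ v := by
  induction v using WellFoundedLT.induction with
  | _ v ih =>
    by_cases hv : IsRunStart f v
    · rw [runRoot_of_isRunStart hv]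
    · have hlt := (runPred_lt_and_apply hv).1
      rw [← runRoot_runPred]
      exact (ih _ hlt).trans hlt.le

lemma isRunStart_runRoot (f : α → α) (v : α) : IsRunStart f (runRoot f v) := by
  induction v using WellFoundedLT.induction with
  | _ v ih =>
    by_cases hv : IsRunStart f v
    · rwa [runRoot_of_isRunStart hv]
    · rw [← runRoot_runPred]
      exact ih _ (runPred_lt_and_apply hv).1

lemma not_isRunStart_of_runRoot_eq (h : runRoot f u = runRoot f v) (huv : u < v) :
    ¬ IsRunStart f v := fun hv =>
  ((runRoot_le f u).trans_lt huv).ne (h.trans (runRoot_of_isRunStart hv))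

lemma le_runPred_of_runRoot_eq (h : runRoot f w = runRoot f v) (hwv : w < v) :
    w ≤ runPred f v := by
  induction w using WellFoundedLT.induction generalizing v with
  | _ w ih =>
    by_contra! hlt
    have hv := not_isRunStart_of_runRoot_eq h hwv
    have hw : ¬ IsRunStart f w := not_isRunStart_of_runRoot_eq
      ((runRoot_runPred f v).trans h.symm) hlt
    obtain ⟨hpw, hfpw⟩ := runPred_lt_and_apply hw
    -- apply the induction hypothesis to `runPred f v` below `w` and to `runPred f w` below `v`
    have h₁ : runPred f v ≤ runPred f w := ih _ hlt ((runRoot_runPred f v).trans h.symm) hlt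
    have h₂ : runPred f w ≤ runPred f v :=
      ih _ hpw ((runRoot_runPred f w).trans h) (hpw.trans hwv)
    have hsame : w = v := by
      rw [← hfpw, le_antisymm h₂ h₁, (runPred_lt_and_apply hv).2]
    exact hwv.ne hsame

lemma apply_eq_of_runRoot_eq (h : runRoot f v = runRoot f u) (huv : u < v)
    (hnext : ∀ w, runRoot f w = runRoot f u → u < w → v ≤ w) : f u = v := by
  have hv := not_isRunStart_of_runRoot_eq h.symm huv
  obtain ⟨hpv, hfpv⟩ := runPred_lt_and_apply hv
  have hup : u ≤ runPred f v := le_runPred_of_runRoot_eq h.symm huv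
  rcases hup.lt_or_eq with hlt | rfl
  · exact absurd (hnext _ ((runRoot_runPred f v).trans h) hlt) hpv.not_ge
  · exact hfpv

variable (f) in
def runTops : Finset α := {t | ∀ w, runRoot f w = runRoot f t → w ≤ t}

lemma mem_runTops {t : α} : t ∈ runTops f ↔ ∀ w, runRoot f w = runRoot f t → w ≤ t := by
  simp [runTops]

lemma eq_of_mem_runTops {t t' : α} (ht : t ∈ runTops f) (ht' : t' ∈ runTops f)
    (h : runRoot f t = runRoot f t') : t = t' :=
  le_antisymm (mem_runTops.1 ht' t h) (mem_runTops.1 ht t' h.symm)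

lemma exists_mem_runTops (f : α → α) (a : α) :
    ∃ t ∈ runTops f, runRoot f t = runRoot f a := by
  have hne : ({w | runRoot f w = runRoot f a} : Finset α).Nonempty := ⟨a, by simp⟩
  have hmax := max'_mem _ hne
  simp only [mem_filter, mem_univ, true_and] at hmax
  refine ⟨_, mem_runTops.2 fun w hw => ?_, hmax⟩
  exact le_max' _ _ (by simpa [hmax] using hw)

lemma card_runTops (f : α → α) : #(runTops f) = #{v | IsRunStart f v} := by
  refine card_nbij (runRoot f) (fun t _ => by simpa using isRunStart_runRoot f t)
    (fun t ht t' ht' h => eq_of_mem_runTops ht ht' h) (fun v hv => ?_)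
  obtain ⟨t, ht, htv⟩ := exists_mem_runTops f v
  simp only [coe_filter, mem_univ, true_and, Set.mem_ofPred_eq] at hv
  exact ⟨t, ht, htv.trans (runRoot_of_isRunStart hv)⟩

end Runs

/-- `S` and `y` are the paper's `(S_1, …, S_m)` and `(n_1, …, n_m)`; `y j` is to become the
image of `max (S j)`. -/
structure IsRunDecomposition {m : ℕ} (S : Fin m → Finset α) (y : Fin m → α) : Prop where
  nonempty : ∀ j, (S j).Nonempty
  disjoint : ∀ i j, i ≠ j → Disjoint (S i) (S j)
  cover : ∀ a, ∃ j, a ∈ S j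
  max_lt_max : ∀ i j, i < j → (S j).max < (S i).max
  min_ne : ∀ j i, i < j → ((S i).filter fun ℓ : α => (S j).max < (ℓ : WithBot α)).min ≠ y j

section

variable {m : ℕ} {S : Fin m → Finset α} {y : Fin m → α}

lemma isRunDecomposition_iff : IsRunDecomposition S y ↔
    (∀ j, (S j).Nonempty) ∧ (∀ i j, i ≠ j → Disjoint (S i) (S j)) ∧ (∀ a, ∃ j, a ∈ S j) ∧
      (∀ i j, i < j → (S j).max < (S i).max) ∧
      ∀ j i, i < j → ((S i).filter fun ℓ : α => (S j).max < (ℓ : WithBot α)).min ≠ y j :=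
  ⟨fun ⟨h₁, h₂, h₃, h₄, h₅⟩ => ⟨h₁, h₂, h₃, h₄, h₅⟩,
    fun ⟨h₁, h₂, h₃, h₄, h₅⟩ => ⟨h₁, h₂, h₃, h₄, h₅⟩⟩

end

namespace IsRunDecomposition

variable {m : ℕ} {S : Fin m → Finset α} {y : Fin m → α} {i j : Fin m} {a b u v : α}

lemma eq_of_mem (hS : IsRunDecomposition S y) (hi : a ∈ S i) (hj : a ∈ S j) : i = j :=
  by_contra fun hij => disjoint_left.1 (hS.disjoint i j hij) hi hj

lemma max'_strictAnti (hS : IsRunDecomposition S y) :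
    StrictAnti fun j => (S j).max' (hS.nonempty j) := fun i j hij => by
  have := hS.max_lt_max i j hij
  rwa [← coe_max' (hS.nonempty i), ← coe_max' (hS.nonempty j), WithBot.coe_lt_coe] at this

/-- Sends each element to the next element of its block, and the maximum of `S j` to `y j`. -/
noncomputable def runMap (hS : IsRunDecomposition S y) (a : α) : α :=
  ({b ∈ S (hS.cover a).choose | a < b}).min.untopD (y (hS.cover a).choose)

lemma runMap_of_mem (hS : IsRunDecomposition S y) (ha : a ∈ S j) :
    hS.runMap a = ({b ∈ S j | a < b}).min.untopD (y j) := by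
  rw [runMap, hS.eq_of_mem (hS.cover a).choose_spec ha]

lemma runMap_max' (hS : IsRunDecomposition S y) (j : Fin m) :
    hS.runMap ((S j).max' (hS.nonempty j)) = y j := by
  rw [hS.runMap_of_mem (max'_mem _ _), filter_false_of_mem, min_empty, WithTop.untopD_top]
  exact fun b hb => (le_max' _ _ hb).not_gt

lemma runMap_eq_min' (hS : IsRunDecomposition S y) (ha : a ∈ S j)
    (hne : ({b ∈ S j | a < b}).Nonempty) : hS.runMap a = ({b ∈ S j | a < b}).min' hne := by
  rw [hS.runMap_of_mem ha, ← coe_min' hne, WithTop.untopD_coe]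

lemma runMap_eq_of_forall_le (hS : IsRunDecomposition S y) (hu : u ∈ S j) (hv : v ∈ S j)
    (huv : u < v) (hnext : ∀ b ∈ S j, u < b → v ≤ b) : hS.runMap u = v := by
  have hne : ({b ∈ S j | u < b}).Nonempty := ⟨v, by simp [hv, huv]⟩
  rw [hS.runMap_eq_min' hu hne]
  obtain ⟨hmem, hlt⟩ := mem_filter.1 (min'_mem _ hne)
  exact le_antisymm (min'_le _ _ (by simp [hv, huv])) (hnext _ hmem hlt)

/-- When `a` is the maximum of another block, this is exactly what `min_ne` provides. -/
lemma exists_mem_between (hS : IsRunDecomposition S y) (hv : v ∈ S j) (hav : a < v)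
    (hfa : hS.runMap a = v) : ∃ u ∈ S j, a ≤ u ∧ u < v := by
  obtain ⟨i, hai⟩ := hS.cover a
  by_cases hne : ({b ∈ S i | a < b}).Nonempty
  · have hvi : v ∈ S i := by
      rw [← hfa, hS.runMap_eq_min' hai hne]
      exact (mem_filter.1 (min'_mem _ hne)).1
    rw [hS.eq_of_mem hvi hv] at hai
    exact ⟨a, hai, le_rfl, hav⟩
  have hamax : (S i).max' (hS.nonempty i) = a := by
    refine le_antisymm (le_of_not_gt fun hlt => hne ⟨(S i).max' (hS.nonempty i), ?_⟩)
      (le_max' _ _ hai)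
    exact mem_filter.2 ⟨max'_mem _ _, hlt⟩
  have hyi : y i = v := by rw [← hfa, ← hamax, hS.runMap_max']
  have hSi : (S i).max = a := by rw [← coe_max' (hS.nonempty i), hamax]
  have hvS : (v : WithBot α) ≤ (S j).max := le_max hv
  rcases lt_trichotomy i j with hij | rfl | hji
  · have := hS.max_lt_max i j hij
    rw [hSi] at this
    exact absurd (this.trans_le' hvS) (WithBot.coe_lt_coe.2 hav).not_gt
  · exact absurd ⟨v, mem_filter.2 ⟨hv, hav⟩⟩ hne
  · have hmin := hS.min_ne i j hji
    simp only [hSi, WithBot.coe_lt_coe, hyi] at hmin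
    have hvF : v ∈ {ℓ ∈ S j | a < ℓ} := mem_filter.2 ⟨hv, hav⟩
    rw [← coe_min' ⟨v, hvF⟩, Ne, WithTop.coe_eq_coe] at hmin
    obtain ⟨hu, hau⟩ := mem_filter.1 (min'_mem _ ⟨v, hvF⟩)
    exact ⟨_, hu, hau.le, (min'_le _ _ hvF).lt_of_ne hmin⟩

lemma isRunStart_runMap_min' (hS : IsRunDecomposition S y) (j : Fin m) :
    IsRunStart hS.runMap ((S j).min' (hS.nonempty j)) := fun a hfa => by
  by_contra! hlt
  obtain ⟨u, hu, -, hlt'⟩ := hS.exists_mem_between (min'_mem _ _) hlt hfa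
  exact (min'_le _ _ hu).not_gt hlt'

section Runs

variable [Fintype α]

lemma runPred_runMap_mem (hS : IsRunDecomposition S y) (hv : v ∈ S j)
    (hmin : (S j).min' (hS.nonempty j) < v) :
    runPred hS.runMap v ∈ S j ∧ runPred hS.runMap v < v := by
  have hne : ({b ∈ S j | b < v}).Nonempty := ⟨_, mem_filter.2 ⟨min'_mem _ _, hmin⟩⟩
  obtain ⟨hu, huv⟩ := mem_filter.1 (max'_mem _ hne)
  have hfu : hS.runMap (({b ∈ S j | b < v}).max' hne) = v :=
    hS.runMap_eq_of_forall_le hu hv huv fun b hb hub =>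
      le_of_not_gt fun hbv => hub.not_ge (le_max' _ _ (mem_filter.2 ⟨hb, hbv⟩))
  have hnot : ¬ IsRunStart hS.runMap v := fun h => (h _ hfu).not_gt huv
  obtain ⟨hp, hfp⟩ := runPred_lt_and_apply hnot
  obtain ⟨u', hu', hpu', hu'v⟩ := hS.exists_mem_between hv hp hfp
  have hpred : runPred hS.runMap v = ({b ∈ S j | b < v}).max' hne :=
    le_antisymm (hpu'.trans (le_max' _ _ (mem_filter.2 ⟨hu', hu'v⟩))) (le_runPred huv hfu)
  exact ⟨hpred ▸ hu, hp⟩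

lemma runRoot_runMap (hS : IsRunDecomposition S y) (ha : a ∈ S j) :
    runRoot hS.runMap a = (S j).min' (hS.nonempty j) := by
  induction a using WellFoundedLT.induction with
  | _ a ih =>
    rcases (min'_le _ _ ha).lt_or_eq with hlt | heq
    · obtain ⟨hp, hplt⟩ := hS.runPred_runMap_mem ha hlt
      rw [← runRoot_runPred]
      exact ih _ hplt hp
    · rw [← heq, runRoot_of_isRunStart (hS.isRunStart_runMap_min' j)]

lemma runRoot_runMap_eq_iff (hS : IsRunDecomposition S y) (ha : a ∈ S i) (hb : b ∈ S j) :
    runRoot hS.runMap a = runRoot hS.runMap b ↔ i = j := by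
  rw [hS.runRoot_runMap ha, hS.runRoot_runMap hb]
  refine ⟨fun h => hS.eq_of_mem (min'_mem (S i) (hS.nonempty i)) ?_, fun h => by subst h; rfl⟩
  exact h ▸ min'_mem _ _

lemma runTops_runMap (hS : IsRunDecomposition S y) :
    runTops hS.runMap = univ.image fun j => (S j).max' (hS.nonempty j) := by
  ext t
  obtain ⟨i, hti⟩ := hS.cover t
  simp only [mem_runTops, mem_image, mem_univ, true_and]
  constructor
  · intro ht
    exact ⟨i, le_antisymm
      (ht _ ((hS.runRoot_runMap_eq_iff (max'_mem _ _) hti).2 rfl)) (le_max' _ _ hti)⟩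
  · rintro ⟨j, rfl⟩ w hw
    obtain ⟨k, hwk⟩ := hS.cover w
    rw [hS.runRoot_runMap_eq_iff hwk (max'_mem _ _)] at hw
    exact le_max' _ _ (hw ▸ hwk)

lemma card_runTops_runMap (hS : IsRunDecomposition S y) : #(runTops hS.runMap) = m := by
  rw [hS.runTops_runMap, card_image_of_injective _ hS.max'_strictAnti.injective, card_univ,
    Fintype.card_fin]

end Runs

end IsRunDecomposition

section Decomposition

variable [Fintype α] (f : α → α) {m : ℕ} (h : #(runTops f) = m)

def runTop (j : Fin m) : α := (runTops f).orderEmbOfFin h j.rev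

def runBlock (j : Fin m) : Finset α := {w | runRoot f w = runRoot f (runTop f h j)}

variable {f h} {i j : Fin m} {w : α}

lemma mem_runBlock : w ∈ runBlock f h j ↔ runRoot f w = runRoot f (runTop f h j) := by
  simp [runBlock]

lemma runTop_mem (j : Fin m) : runTop f h j ∈ runTops f := orderEmbOfFin_mem _ _ _

lemma runTop_strictAnti : StrictAnti (runTop f h) := fun _ _ hij =>
  ((runTops f).orderEmbOfFin h).strictMono (Fin.rev_lt_rev.2 hij)

lemma exists_runTop_eq {t : α} (ht : t ∈ runTops f) : ∃ j, runTop f h j = t := by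
  obtain ⟨i, hi⟩ : t ∈ Set.range ((runTops f).orderEmbOfFin h) := by
    rwa [range_orderEmbOfFin]
  exact ⟨i.rev, by rw [runTop, Fin.rev_rev, hi]⟩

lemma max_runBlock (j : Fin m) : (runBlock f h j).max = runTop f h j :=
  le_antisymm
    (Finset.max_le fun _ hw => WithBot.coe_le_coe.2 (mem_runTops.1 (runTop_mem j) _
      (mem_runBlock.1 hw)))
    (le_max (mem_runBlock.2 rfl))

lemma min_filter_runBlock_ne (hij : i < j) :
    ((runBlock f h i).filter fun ℓ : α => (runBlock f h j).max < (ℓ : WithBot α)).min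
      ≠ f (runTop f h j) := by
  intro hmin
  obtain ⟨hvi, htv⟩ := mem_filter.1 (mem_of_min hmin)
  rw [max_runBlock, WithBot.coe_lt_coe] at htv
  have hv : ¬ IsRunStart f (f (runTop f h j)) := fun hs => (hs _ rfl).not_gt htv
  obtain ⟨hp, hfp⟩ := runPred_lt_and_apply hv
  have hpi : runRoot f (runPred f (f (runTop f h j))) = runRoot f (runTop f h i) :=
    (runRoot_runPred f _).trans (mem_runBlock.1 hvi)
  have htp : runTop f h j < runPred f (f (runTop f h j)) := by
    refine lt_of_le_of_ne (le_runPred htv rfl) fun he => ?_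
    have hji := eq_of_mem_runTops (runTop_mem j) (runTop_mem i)
      ((congrArg (runRoot f) he).trans hpi)
    exact hij.ne' (runTop_strictAnti.injective hji)
  have hmem : runPred f (f (runTop f h j)) ∈
      (runBlock f h i).filter fun ℓ : α => (runBlock f h j).max < (ℓ : WithBot α) :=
    mem_filter.2 ⟨mem_runBlock.2 hpi, (max_runBlock j).trans_lt (WithBot.coe_lt_coe.2 htp)⟩
  have hle := min_le hmem
  rw [hmin] at hle
  exact hp.not_ge (WithTop.coe_le_coe.1 hle)

variable (f h) in
lemma isRunDecomposition_runBlock :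
    IsRunDecomposition (runBlock f h) fun j => f (runTop f h j) where
  nonempty j := ⟨runTop f h j, mem_runBlock.2 rfl⟩
  disjoint i j hij := disjoint_left.2 fun _ hai haj => hij <| runTop_strictAnti.injective <|
    eq_of_mem_runTops (runTop_mem i) (runTop_mem j)
      ((mem_runBlock.1 hai).symm.trans (mem_runBlock.1 haj))
  cover a := by
    obtain ⟨t, ht, hta⟩ := exists_mem_runTops f a
    obtain ⟨j, rfl⟩ := exists_runTop_eq (h := h) ht
    exact ⟨j, mem_runBlock.2 hta.symm⟩
  max_lt_max i j hij := by
    rw [max_runBlock, max_runBlock]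
    exact WithBot.coe_lt_coe.2 (runTop_strictAnti hij)
  min_ne _ _ hij := min_filter_runBlock_ne hij

lemma max'_runBlock (j : Fin m) (hne : (runBlock f h j).Nonempty) :
    (runBlock f h j).max' hne = runTop f h j := by
  rw [← WithBot.coe_inj, coe_max', max_runBlock]

variable (f h) in
lemma runMap_runBlock : (isRunDecomposition_runBlock f h).runMap = f := by
  set hB := isRunDecomposition_runBlock f h
  funext a
  obtain ⟨j, ha⟩ := hB.cover a
  rcases (le_max' _ a ha).lt_or_eq with hlt | heq
  · have hne : ({b ∈ runBlock f h j | a < b}).Nonempty :=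
      ⟨_, mem_filter.2 ⟨max'_mem _ _, hlt⟩⟩
    obtain ⟨hv, hav⟩ := mem_filter.1 (min'_mem _ hne)
    rw [hB.runMap_eq_min' ha hne]
    refine (apply_eq_of_runRoot_eq ((mem_runBlock.1 hv).trans (mem_runBlock.1 ha).symm) hav
      fun w hw haw => min'_le _ _ (mem_filter.2 ⟨?_, haw⟩)).symm
    exact mem_runBlock.2 (hw.trans (mem_runBlock.1 ha))
  · rw [heq, hB.runMap_max']
    exact congrArg f (max'_runBlock j _).symm

namespace IsRunDecomposition

variable {S : Fin m → Finset α} {y : Fin m → α}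

lemma runTop_runMap (hS : IsRunDecomposition S y) (h : #(runTops hS.runMap) = m) (j : Fin m) :
    runTop hS.runMap h j = (S j).max' (hS.nonempty j) := by
  have := orderEmbOfFin_unique h (f := fun j => (S j.rev).max' (hS.nonempty j.rev))
    (fun j => by rw [hS.runTops_runMap]; exact mem_image_of_mem _ (mem_univ _))
    (fun _ _ hab => hS.max'_strictAnti (Fin.rev_lt_rev.2 hab))
  rw [runTop, ← this]
  simp only [Fin.rev_rev]

lemma runBlock_runMap (hS : IsRunDecomposition S y) (h : #(runTops hS.runMap) = m) :
    runBlock hS.runMap h = S := by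
  funext j
  ext w
  obtain ⟨k, hwk⟩ := hS.cover w
  rw [mem_runBlock, hS.runTop_runMap, hS.runRoot_runMap_eq_iff hwk (max'_mem _ _)]
  exact ⟨fun hkj => hkj ▸ hwk, hS.eq_of_mem hwk⟩

end IsRunDecomposition

end Decomposition

noncomputable def runDecompositionEquiv [Fintype α] (m : ℕ) :
    {f : α → α // #{v | IsRunStart f v} = m} ≃
      {p : (Fin m → Finset α) × (Fin m → α) // IsRunDecomposition p.1 p.2} where
  toFun f := ⟨(runBlock f.1 _, fun j => f.1 (runTop f.1 _ j)),
    isRunDecomposition_runBlock f.1 ((card_runTops f.1).trans f.2)⟩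
  invFun p := ⟨p.2.runMap, (card_runTops _).symm.trans p.2.card_runTops_runMap⟩
  left_inv f := Subtype.ext (runMap_runBlock f.1 _)
  right_inv := by
    rintro ⟨⟨S, y⟩, hS⟩
    refine Subtype.ext (Prod.ext (hS.runBlock_runMap _) (funext fun j => ?_))
    dsimp only
    rw [hS.runTop_runMap, hS.runMap_max']

end AscendingRuns

open AscendingRuns in
lemma numRuns_eq_card_isRunStart {n : ℕ} (f : Fin n → Fin n) :
    numRuns f = #{v | IsRunStart f v} := by
  unfold numRuns
  congr

open AscendingRuns in
theorem mappingRunCount_eq_card_pairs_general (n m : ℕ) :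
    mappingRunCount n m =
      Nat.card {p : (Fin m → Finset (Fin n)) × (Fin m → Fin n) //
        (∀ j, (p.1 j).Nonempty) ∧
        (∀ i j, i ≠ j → Disjoint (p.1 i) (p.1 j)) ∧
        (∀ a : Fin n, ∃ j, a ∈ p.1 j) ∧
        (∀ i j, i < j → (p.1 j).max < (p.1 i).max) ∧
        (∀ j i, i < j →
          ((p.1 i).filter (fun ℓ : Fin n => (p.1 j).max < (ℓ : WithBot (Fin n)))).min
            ≠ ((p.2 j : Fin n) : WithBot (Fin n)))} := by
  have hruns (f : Fin n → Fin n) : numRuns f = m ↔ #{v | IsRunStart f v} = m := by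
    rw [numRuns_eq_card_isRunStart]
  exact Nat.card_congr <| (Equiv.subtypeEquivRight hruns).trans <|
    (runDecompositionEquiv m).trans (Equiv.subtypeEquivRight fun _ => isRunDecomposition_iff)

/-- The number of `n`-mappings with exactly `m` ascending runs equals the number
of pairs `(S, x)`, where `S = (S_1, …, S_m)` is a set partition of `Fin n` into `m`
nonempty blocks ordered decreasingly by their maxima, and `x = (n_1, …, n_m)` is a
sequence of elements of `Fin n` such that for each `j`, `n_j` avoids, for every
`i < j`, the minimum of `{ℓ ∈ S_i : ℓ > max (S_j)}`. -/
theorem mappingRunCount_eq_card_pairs (n m : ℕ) (hn : 1 ≤ n) (hm : 1 ≤ m) (hmn : m ≤ n) :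
    mappingRunCount n m =
      Nat.card {p : (Fin m → Finset (Fin n)) × (Fin m → Fin n) //
        (∀ j, (p.1 j).Nonempty) ∧
        (∀ i j, i ≠ j → Disjoint (p.1 i) (p.1 j)) ∧
        (∀ a : Fin n, ∃ j, a ∈ p.1 j) ∧
        (∀ i j, i < j → (p.1 j).max < (p.1 i).max) ∧
        (∀ j i, i < j →
          ((p.1 i).filter (fun ℓ : Fin n => (p.1 j).max < (ℓ : WithBot (Fin n)))).min
            ≠ ((p.2 j : Fin n) : WithBot (Fin n)))} :=
  mappingRunCount_eq_card_pairs_general n m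
end

section
/- Let n ≥ 1 and 1 ≤ m ≤ n, and let S = (S_1, …, S_m) be a family of pairwise disjoint nonempty subsets of Fin n whose union is all of Fin n, ordered so that max(S_1) > max(S_2) > ⋯ > max(S_m). Then the number of sequences x = (n_1, …, n_m) of elements of Fin n such that for each j, n_j does not lie in the set { min { ℓ ∈ S_i : ℓ > max(S_j) } : 1 ≤ i < j } equals the falling factorial n^{\underline m} = n(n−1)⋯(n−m+1). (In particular, for each j the forbidden set has exactly j−1 elements.) -/
/-- Given a set partition `S = (S_1, …, S_m)` of `Fin n` into `m` nonempty blocks,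
ordered decreasingly by their maxima, the number of sequences `x = (n_1, …, n_m)`
of elements of `Fin n` such that for each `j`, `n_j` avoids, for every `i < j`,
the minimum of `{ℓ ∈ S_i : ℓ > max (S_j)}`, equals the falling factorial
`n^{\underline{m}} = n(n-1)⋯(n-m+1)`. -/
theorem card_admissible_sequences (n m : ℕ) (hn : 1 ≤ n) (hm : 1 ≤ m) (hmn : m ≤ n)
    (S : Fin m → Finset (Fin n))
    (hne : ∀ j, (S j).Nonempty)
    (hdisj : ∀ i j, i ≠ j → Disjoint (S i) (S j))
    (hcover : ∀ a : Fin n, ∃ j, a ∈ S j)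
    (hmax : ∀ i j, i < j → (S j).max < (S i).max) :
    Nat.card {x : Fin m → Fin n //
        ∀ j i, i < j →
          ((S i).filter (fun ℓ : Fin n => (S j).max < (ℓ : WithBot (Fin n)))).min
            ≠ ((x j : Fin n) : WithBot (Fin n))} = n.descFactorial m := by
  classical
  have hfilt : ∀ (j i : Fin m), i < j →
      ((S i).filter (fun ℓ : Fin n => (S j).max < (ℓ : WithBot (Fin n)))).Nonempty := by
    intro j i hij
    refine ⟨(S i).max' (hne i), Finset.mem_filter.2 ⟨(S i).max'_mem (hne i), ?_⟩⟩
    have h := hmax i j hij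
    rwa [← (S i).coe_max' (hne i)] at h
  set d : Fin n := ⟨0, hn⟩ with hd
  set f : Fin m → Fin m → Fin n := fun j i =>
    if h : i < j then ((S i).filter (fun ℓ : Fin n => (S j).max < (ℓ : WithBot (Fin n)))).min' (hfilt j i h)
    else d with hf
  have hfmem : ∀ (j i : Fin m), i < j → f j i ∈ S i := by
    intro j i h
    have := Finset.min'_mem _ (hfilt j i h)
    simp only [hf, dif_pos h]
    exact (Finset.mem_filter.1 this).1
  set B : Fin m → Finset (Fin n) := fun j => (Finset.Iio j).image (f j) with hB
  have hBcard : ∀ j, (B j).card = (j : ℕ) := by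
    intro j
    rw [hB, Finset.card_image_of_injOn]
    · simp
    intro i₁ h₁ i₂ h₂ heq
    by_contra hne'
    have := hdisj i₁ i₂ hne'
    exact (Finset.disjoint_left.1 this (hfmem j i₁ (Finset.mem_Iio.1 h₁)))
      (heq ▸ hfmem j i₂ (Finset.mem_Iio.1 h₂))
  set T : Fin m → Finset (Fin n) := fun j => Finset.univ \ B j with hT
  have hTcard : ∀ j, (T j).card = n - (j : ℕ) := by
    intro j
    rw [hT]
    rw [Finset.card_sdiff_of_subset (Finset.subset_univ _), hBcard, Finset.card_univ, Fintype.card_fin]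
  have hequiv : ∀ (x : Fin m → Fin n),
      (∀ j i, i < j →
          ((S i).filter (fun ℓ : Fin n => (S j).max < (ℓ : WithBot (Fin n)))).min
            ≠ ((x j : Fin n) : WithBot (Fin n))) ↔ ∀ j, x j ∈ T j := by
    intro x
    constructor
    · intro h j
      simp only [hT, Finset.mem_sdiff, Finset.mem_univ, true_and, hB, Finset.mem_image]
      rintro ⟨i, hi, heq⟩
      have hij := Finset.mem_Iio.1 hi
      have := h j i hij
      rw [← Finset.coe_min' (hfilt j i hij)] at this
      apply this
      rw [← heq]
      simp only [hf]; rw [dif_pos hij]; rfl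
    · intro h j i hij
      have := h j
      simp only [hT, Finset.mem_sdiff, Finset.mem_univ, true_and, hB, Finset.mem_image] at this
      rw [← Finset.coe_min' (hfilt j i hij)]
      intro hc
      exact this ⟨i, Finset.mem_Iio.2 hij, by simp [hf, dif_pos hij, WithBot.coe_inj.1 hc]⟩
  rw [Nat.card_eq_fintype_card]
  have e1 : {x : Fin m → Fin n //
        ∀ j i, i < j →
          ((S i).filter (fun ℓ : Fin n => (S j).max < (ℓ : WithBot (Fin n)))).min
            ≠ ((x j : Fin n) : WithBot (Fin n))} ≃ ∀ j, {a : Fin n // a ∈ T j} :=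
    (Equiv.subtypeEquivRight hequiv).trans (Equiv.subtypePiEquivPi)
  rw [Fintype.card_congr e1, Fintype.card_pi]
  have : ∀ j : Fin m, Fintype.card {a : Fin n // a ∈ T j} = n - (j : ℕ) := by
    intro j; rw [Fintype.card_coe, hTcard]
  simp only [this]
  rw [Fin.prod_univ_eq_prod_range, Nat.descFactorial_eq_prod_range]
end

section
/- There exists a constant C > 0 such that for all n ≥ 1, the mean number of ascending runs of a uniformly random function f : Fin n → Fin n satisfies | E_n − (1 − e^{−1})·n | ≤ C, where E_n = n^{−n} · Σ_{f : Fin n → Fin n} runs(f). In other words, E(R_n) = (1 − e^{−1})·n + O(1). -/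
/-- The mean number of ascending runs of a uniformly random `n`-mapping. -/
noncomputable def meanRuns (n : ℕ) : ℝ :=
  (∑ f : Fin n → Fin n, (numRuns f : ℝ)) / (n : ℝ) ^ n

open Finset Real

theorem card_filter_forall_eq_imp_le {n : ℕ} (j : Fin n) :
    #{f : Fin n → Fin n | ∀ i, f i = j → j ≤ i} = (n - 1) ^ (j : ℕ) * n ^ (n - j) := by
  have hpi : ({f : Fin n → Fin n | ∀ i, f i = j → j ≤ i} : Finset _)
      = Fintype.piFinset fun i => if i < j then {j}ᶜ else univ := by
    ext f
    simp only [mem_filter, mem_univ, true_and, Fintype.mem_piFinset]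
    refine forall_congr' fun i => ?_
    split_ifs with hij
    · simp [hij.not_ge]
    · simpa using fun _ => not_lt.mp hij
  rw [hpi, Fintype.card_piFinset]
  simp_rw [apply_ite card, card_compl, card_singleton, card_univ, Fintype.card_fin]
  rw [prod_ite, prod_const, prod_const]
  simp_rw [not_lt, filter_gt_eq_Iio, filter_le_eq_Ici, Fin.card_Iio, Fin.card_Ici]

theorem sum_numRuns (n : ℕ) :
    ∑ f : Fin n → Fin n, numRuns f = ∑ j : Fin n, (n - 1) ^ (j : ℕ) * n ^ (n - j) := by
  simp_rw [numRuns, card_filter]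
  rw [sum_comm]
  simp_rw [← card_filter, card_filter_forall_eq_imp_le]

theorem meanRuns_eq_sum_pow (n : ℕ) :
    meanRuns n = ∑ j ∈ range n, (1 - (n : ℝ)⁻¹) ^ j := by
  rw [meanRuns, ← Nat.cast_sum, sum_numRuns, Nat.cast_sum, sum_div,
    ← Fin.sum_univ_eq_sum_range]
  refine sum_congr rfl fun j _ => ?_
  have hn : 1 ≤ n := Fin.pos j
  have hn₀ : (n : ℝ) ≠ 0 := by positivity
  have hpred : ((n - 1 : ℕ) : ℝ) = n * (1 - (n : ℝ)⁻¹) := by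
    rw [Nat.cast_sub hn, mul_sub, mul_inv_cancel₀ hn₀, Nat.cast_one, mul_one]
  calc (((n - 1) ^ (j : ℕ) * n ^ (n - j) : ℕ) : ℝ) / (n : ℝ) ^ n
      = (1 - (n : ℝ)⁻¹) ^ (j : ℕ) * ((n : ℝ) ^ (j : ℕ) * (n : ℝ) ^ (n - j)) / (n : ℝ) ^ n := by
        rw [Nat.cast_mul, Nat.cast_pow, Nat.cast_pow, hpred, mul_pow]; ring
    _ = (1 - (n : ℝ)⁻¹) ^ (j : ℕ) := by
        rw [← pow_add, Nat.add_sub_cancel' j.is_lt.le, mul_div_cancel_right₀ _ (pow_ne_zero _ hn₀)]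

theorem meanRuns_eq (n : ℕ) : meanRuns n = n * (1 - (1 - (n : ℝ)⁻¹) ^ n) := by
  rcases n.eq_zero_or_pos with rfl | hn
  · simp [meanRuns_eq_sum_pow]
  · rw [meanRuns_eq_sum_pow, ← geom_sum_mul_neg, sub_sub_cancel]
    field_simp

theorem one_sub_inv_pow_le_exp_neg_one {n : ℕ} (hn : 1 ≤ n) :
    (1 - (n : ℝ)⁻¹) ^ n ≤ exp (-1) := by
  simpa [one_div] using one_sub_div_pow_le_exp_neg (t := 1) (by exact_mod_cast hn)

theorem exp_neg_one_le_one_sub_inv_succ_pow (m : ℕ) :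
    exp (-1) ≤ (1 - ((m + 1 : ℕ) : ℝ)⁻¹) ^ m := by
  have hinv : (1 - ((m + 1 : ℕ) : ℝ)⁻¹) ^ m * (1 + (m : ℝ)⁻¹) ^ m = 1 := by
    rcases m.eq_zero_or_pos with rfl | hm
    · simp
    · have hm₀ : (m : ℝ) ≠ 0 := by positivity
      have hprod : (1 - ((m : ℝ) + 1)⁻¹) * (1 + (m : ℝ)⁻¹) = 1 := by field_simp; ring
      rw [← mul_pow, Nat.cast_succ, hprod, one_pow]
  have hx : 0 ≤ 1 - ((m + 1 : ℕ) : ℝ)⁻¹ := sub_nonneg.mpr (Nat.cast_inv_le_one _)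
  rw [exp_neg, inv_le_iff_one_le_mul₀' (exp_pos 1)]
  calc 1 = (1 - ((m + 1 : ℕ) : ℝ)⁻¹) ^ m * (1 + (m : ℝ)⁻¹) ^ m := hinv.symm
    _ ≤ (1 - ((m + 1 : ℕ) : ℝ)⁻¹) ^ m * exp 1 := by gcongr; exact one_add_inv_pow_le_exp
    _ = _ := mul_comm _ _

theorem exp_neg_one_mul_le_one_sub_inv_pow (n : ℕ) :
    exp (-1) * (1 - (n : ℝ)⁻¹) ≤ (1 - (n : ℝ)⁻¹) ^ n := by
  rcases n with _ | m
  · simp [exp_le_one_iff]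
  · rw [pow_succ]
    gcongr
    · exact sub_nonneg.mpr (Nat.cast_inv_le_one _)
    · exact exp_neg_one_le_one_sub_inv_succ_pow m

/-- The expected number of ascending runs of a random `n`-mapping is
`(1 - e⁻¹)·n + O(1)`. -/
theorem meanRuns_asymptotic :
    ∃ C : ℝ, 0 < C ∧ ∀ n : ℕ, 1 ≤ n →
      |meanRuns n - (1 - Real.exp (-1)) * n| ≤ C := by
  refine ⟨exp (-1), exp_pos _, fun n hn => ?_⟩
  set x : ℝ := 1 - (n : ℝ)⁻¹ with hx
  have hupper : x ^ n ≤ exp (-1) := one_sub_inv_pow_le_exp_neg_one hn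
  have hlower : exp (-1) * x ≤ x ^ n := exp_neg_one_mul_le_one_sub_inv_pow n
  have hn₀ : (0 : ℝ) < n := by exact_mod_cast hn
  rw [meanRuns_eq, show n * (1 - x ^ n) - (1 - exp (-1)) * n = n * (exp (-1) - x ^ n) by ring,
    abs_of_nonneg (mul_nonneg hn₀.le (sub_nonneg.mpr hupper))]
  calc n * (exp (-1) - x ^ n) ≤ n * (exp (-1) * (1 - x)) := by gcongr; linarith
    _ = exp (-1) := by rw [hx, sub_sub_cancel, mul_left_comm, mul_inv_cancel₀ hn₀.ne', mul_one]
end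

section
/- Let τ : ℝ → ℝ satisfy τ(1) = 1 and v·e^{τ(v)} + 1 − v = τ(v)·v·e^{τ(v)} for all v in some neighbourhood of 1, and suppose τ is twice differentiable at 1 (differentiable in a neighbourhood of 1 with derivative differentiable at 1). Then the second derivative of τ at 1 equals 2e^{−1} − 2e^{−2}; consequently U''(0) = τ''(1) + τ'(1) = e^{−1} − 2e^{−2} ≠ 0, where U(s) = −1 + s + τ(e^s). -/
/-- If `τ` solves the characteristic equation `v·e^{τ(v)} + 1 − v = τ(v)·v·e^{τ(v)}`
near `v = 1` with `τ(1) = 1` and is twice differentiable at `1` (differentiable in a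
neighbourhood of `1` with derivative differentiable at `1`), then
`τ''(1) = 2e⁻¹ − 2e⁻²`; consequently, for `U(s) = −1 + s + τ(e^s)` one has
`U''(0) = τ''(1) + τ'(1) = e⁻¹ − 2e⁻² ≠ 0`. -/
theorem tau_second_deriv_at_one (τ : ℝ → ℝ) (hτ1 : τ 1 = 1)
    (heq : ∀ᶠ v in nhds (1 : ℝ),
      v * Real.exp (τ v) + 1 - v = τ v * v * Real.exp (τ v))
    (hdiff : ∀ᶠ v in nhds (1 : ℝ), DifferentiableAt ℝ τ v)
    (hdiff2 : DifferentiableAt ℝ (deriv τ) 1) :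
    deriv (deriv τ) 1 = 2 * Real.exp (-1) - 2 * Real.exp (-2) ∧
    deriv (deriv (fun s : ℝ => -1 + s + τ (Real.exp s))) 0
      = deriv (deriv τ) 1 + deriv τ 1 ∧
    deriv (deriv (fun s : ℝ => -1 + s + τ (Real.exp s))) 0
      = Real.exp (-1) - 2 * Real.exp (-2) ∧
    Real.exp (-1) - 2 * Real.exp (-2) ≠ 0 := by
  have he1 : Real.exp (-1) * Real.exp 1 = 1 := by
    rw [← Real.exp_add]; norm_num
  have he2 : Real.exp (-2) = Real.exp (-1) * Real.exp (-1) := by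
    rw [← Real.exp_add]; norm_num
  have hτd1 : DifferentiableAt ℝ τ 1 := hdiff.self_of_nhds
  -- eventual identity of first derivatives
  have hE : ∀ᶠ v in nhds (1:ℝ),
      Real.exp (τ v) + v * (Real.exp (τ v) * deriv τ v) - 1
        = (deriv τ v * v + τ v * 1) * Real.exp (τ v)
          + τ v * v * (Real.exp (τ v) * deriv τ v) := by
    filter_upwards [heq.eventually_nhds, hdiff] with v hv hτv
    have hτ : HasDerivAt τ (deriv τ v) v := hτv.hasDerivAt
    have hexp : HasDerivAt (fun w => Real.exp (τ w))
        (Real.exp (τ v) * deriv τ v) v := hτ.exp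
    have hL : HasDerivAt (fun w => w * Real.exp (τ w) + 1 - w)
        (1 * Real.exp (τ v) + v * (Real.exp (τ v) * deriv τ v) - 1) v :=
      (((hasDerivAt_id v).mul hexp).add_const 1).sub (hasDerivAt_id v)
    have hR : HasDerivAt (fun w => τ w * w * Real.exp (τ w))
        ((deriv τ v * v + τ v * 1) * Real.exp (τ v)
          + τ v * v * (Real.exp (τ v) * deriv τ v)) v :=
      (hτ.mul (hasDerivAt_id v)).mul hexp
    have hde : deriv (fun w => w * Real.exp (τ w) + 1 - w) v
        = deriv (fun w => τ w * w * Real.exp (τ w)) v :=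
      Filter.EventuallyEq.deriv_eq hv
    rw [hL.deriv, hR.deriv] at hde
    linarith [hde]
  -- first derivative at 1
  have ha : deriv τ 1 = -Real.exp (-1) := by
    have h0 := hE.self_of_nhds
    rw [hτ1] at h0
    have hep : (0:ℝ) < Real.exp 1 := Real.exp_pos 1
    nlinarith [h0, he1]
  -- second derivative at 1
  set c := deriv (deriv τ) 1 with hcdef
  have hc : c = 2 * Real.exp (-1) - 2 * Real.exp (-2) := by
    have hτ : HasDerivAt τ (deriv τ 1) 1 := hτd1.hasDerivAt
    have ht2 : HasDerivAt (deriv τ) c 1 := hdiff2.hasDerivAt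
    have hexp : HasDerivAt (fun w => Real.exp (τ w))
        (Real.exp (τ 1) * deriv τ 1) 1 := hτ.exp
    have hL : HasDerivAt
        (fun v => Real.exp (τ v) + v * (Real.exp (τ v) * deriv τ v) - 1)
        (Real.exp (τ 1) * deriv τ 1
          + (1 * (Real.exp (τ 1) * deriv τ 1)
            + 1 * (Real.exp (τ 1) * deriv τ 1 * deriv τ 1 + Real.exp (τ 1) * c))) 1 :=
      (hexp.add ((hasDerivAt_id 1).mul (hexp.mul ht2))).sub_const 1
    have hR : HasDerivAt
        (fun v => (deriv τ v * v + τ v * 1) * Real.exp (τ v)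
          + τ v * v * (Real.exp (τ v) * deriv τ v))
        (((c * 1 + deriv τ 1 * 1) + deriv τ 1 * 1) * Real.exp (τ 1)
          + (deriv τ 1 * 1 + τ 1 * 1) * (Real.exp (τ 1) * deriv τ 1)
          + ((deriv τ 1 * 1 + τ 1 * 1) * (Real.exp (τ 1) * deriv τ 1)
            + τ 1 * 1 * (Real.exp (τ 1) * deriv τ 1 * deriv τ 1 + Real.exp (τ 1) * c))) 1 :=
      (((ht2.mul (hasDerivAt_id 1)).add (hτ.mul_const 1)).mul hexp).add
        ((hτ.mul (hasDerivAt_id 1)).mul (hexp.mul ht2))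
    have hde := Filter.EventuallyEq.deriv_eq hE
    rw [hL.deriv, hR.deriv, hτ1, ha] at hde
    have hep : (0:ℝ) < Real.exp 1 := Real.exp_pos 1
    nlinarith [hde, he1, he2]
  -- the U part
  have hU : ∀ᶠ s in nhds (0:ℝ),
      deriv (fun s => -1 + s + τ (Real.exp s)) s
        = 1 + deriv τ (Real.exp s) * Real.exp s := by
    have hc1 : Filter.Tendsto Real.exp (nhds 0) (nhds 1) := by
      have h := Real.continuous_exp.continuousAt (x := (0:ℝ))
      rwa [ContinuousAt, Real.exp_zero] at h
    filter_upwards [hc1.eventually hdiff] with s hs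
    have h1 : HasDerivAt (fun s => τ (Real.exp s))
        (deriv τ (Real.exp s) * Real.exp s) s :=
      hs.hasDerivAt.comp s (Real.hasDerivAt_exp s)
    have h2 : HasDerivAt (fun s : ℝ => -1 + s + τ (Real.exp s))
        (1 + deriv τ (Real.exp s) * Real.exp s) s :=
      ((hasDerivAt_id s).const_add (-1)).add h1
    rw [h2.deriv]
  have hU2 : deriv (deriv (fun s : ℝ => -1 + s + τ (Real.exp s))) 0
      = c + deriv τ 1 := by
    rw [Filter.EventuallyEq.deriv_eq hU]
    have ht2 : HasDerivAt (deriv τ) c 1 := hdiff2.hasDerivAt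
    have h1 : HasDerivAt (fun s => deriv τ (Real.exp s)) (c * Real.exp 0) 0 := by
      have h : HasDerivAt (deriv τ) c (Real.exp 0) := by rw [Real.exp_zero]; exact ht2
      exact h.comp 0 (Real.hasDerivAt_exp 0)
    have h3 : HasDerivAt (fun s => 1 + deriv τ (Real.exp s) * Real.exp s)
        (c * Real.exp 0 * Real.exp 0 + deriv τ (Real.exp 0) * Real.exp 0) 0 :=
      (h1.mul (Real.hasDerivAt_exp 0)).const_add 1
    rw [h3.deriv]
    simp [Real.exp_zero]
  refine ⟨hc, hU2, ?_, ?_⟩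
  · rw [hU2, hc, ha]; ring
  · have hep : (2.7182818283 : ℝ) < Real.exp 1 := Real.exp_one_gt_d9
    have hpos : (0:ℝ) < Real.exp (-1) := Real.exp_pos _
    nlinarith [mul_pos hpos (show (0:ℝ) < Real.exp 1 - 2 by linarith), he1, he2]
end

section
/- For every n ≥ 1, Σ_{m=1}^{n} (n−1)^{\underline{m−1}} · S(n,m) = n^{n−1}, where (n−1)^{\underline{m−1}} = (n−1)(n−2)⋯(n−m+1) is a falling factorial and S(n,m) is the Stirling number of the second kind; equivalently, summing the counts F_{n,m} of Cayley trees of size n with exactly m ascending runs over all m recovers Cayley's formula n^{n−1}. -/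
/-!
A partition of `Fin n` into `m` blocks is the partition into fibres of exactly `k^{\underline m}`
maps `Fin n → Fin k`, namely the injective maps from its blocks to `Fin k`; grouping all `k ^ n`
maps by their fibres gives `∑ₘ S(n,m) k^{\underline m} = k ^ n`. For `k = n ≥ 1` the term `m = 0`
vanishes and `n (n-1)^{\underline{m-1}} = n^{\underline m}`, so `n` times the sum is `n ^ n`.
-/

open Finset Function

variable {α β γ : Type*}

noncomputable def Function.Surjective.embeddingEquiv {π : α → γ} (hπ : Surjective π) :
    (γ ↪ β) ≃ {f : α → β // ∀ a b, f a = f b ↔ π a = π b} :=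
  Equiv.ofBijective (fun g => ⟨g ∘ π, fun _ _ => g.injective.eq_iff⟩) <| by
    refine ⟨fun g g' h => DFunLike.coe_injective <| hπ.injective_comp_right
      (congrArg Subtype.val h), fun ⟨f, hf⟩ => ?_⟩
    have hsec : ∀ c, π (surjInv hπ c) = c := surjInv_eq hπ
    refine ⟨⟨f ∘ surjInv hπ, fun c d h => ?_⟩, Subtype.ext <| funext fun a => ?_⟩
    · simpa only [hsec] using (hf _ _).1 h
    · exact (hf _ _).2 (hsec (π a))

namespace Finpartition

variable [DecidableEq α]

theorem eq_of_part_eq_part_iff {s : Finset α} {P Q : Finpartition s}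
    (h : ∀ a ∈ s, ∀ b ∈ s, P.part a = P.part b ↔ Q.part a = Q.part b) : P = Q := by
  have hpart : ∀ a ∈ s, P.part a = Q.part a := fun a ha => by
    ext b
    by_cases hb : b ∈ s
    · rw [P.mem_part_iff_part_eq_part hb ha, Q.mem_part_iff_part_eq_part hb ha, h b hb a ha]
    · exact iff_of_false (fun h => hb (P.part_subset a h)) (fun h => hb (Q.part_subset a h))
  ext t
  constructor <;> intro ht
  · obtain ⟨a, ha, rfl⟩ := P.part_surjOn ht
    exact hpart a ha ▸ Q.part_mem.2 ha
  · obtain ⟨a, ha, rfl⟩ := Q.part_surjOn ht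
    exact hpart a ha ▸ P.part_mem.2 ha

variable [Fintype α]

def partOf (P : Finpartition (univ : Finset α)) (a : α) : P.parts :=
  ⟨P.part a, P.part_mem.2 (mem_univ a)⟩

theorem partOf_surjective (P : Finpartition (univ : Finset α)) : Surjective P.partOf := by
  rintro ⟨t, ht⟩
  obtain ⟨a, -, rfl⟩ := P.part_surjOn ht
  exact ⟨a, rfl⟩

open Classical in
noncomputable def ker (f : α → β) : Finpartition (univ : Finset α) :=
  ofSetoid (Setoid.ker f)

theorem part_ker_eq_part_ker_iff (f : α → β) (a b : α) :
    (ker f).part a = (ker f).part b ↔ f a = f b := by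
  classical
  rw [← mem_part_iff_part_eq_part _ (mem_univ a) (mem_univ b), ker, mem_part_ofSetoid_iff_rel]
  exact eq_comm

theorem ker_eq_iff (f : α → β) (P : Finpartition (univ : Finset α)) :
    ker f = P ↔ ∀ a b, f a = f b ↔ P.partOf a = P.partOf b := by
  simp only [partOf, Subtype.mk.injEq, ← part_ker_eq_part_ker_iff f]
  exact ⟨fun h => h ▸ fun _ _ => Iff.rfl,
    fun h => eq_of_part_eq_part_iff fun a _ b _ => h a b⟩

theorem card_fiber_ker [Fintype β] (P : Finpartition (univ : Finset α)) :
    Nat.card {f : α → β // ker f = P} = (Fintype.card β).descFactorial #P.parts := by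
  rw [Nat.card_congr ((Equiv.subtypeEquivRight fun f => ker_eq_iff f P).trans
    P.partOf_surjective.embeddingEquiv.symm), Nat.card_eq_fintype_card,
    Fintype.card_embedding_eq, Fintype.card_coe]

theorem sum_descFactorial_card_parts [Fintype β] :
    ∑ P : Finpartition (univ : Finset α), (Fintype.card β).descFactorial #P.parts
      = Fintype.card β ^ Fintype.card α := by
  calc _ = ∑ P, Nat.card {f : α → β // ker f = P} := by simp only [card_fiber_ker]
    _ = Nat.card (α → β) := by
      rw [← Nat.card_sigma]; exact Nat.card_congr (Equiv.sigmaFiberEquiv ker)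
    _ = _ := by simp [Nat.card_eq_fintype_card]

end Finpartition

theorem sum_stirlingSecond_mul_descFactorial (n k : ℕ) :
    ∑ m ∈ range (n + 1), stirlingSecond n m * k.descFactorial m = k ^ n := by
  have hcard : ∀ P : Finpartition (univ : Finset (Fin n)), #P.parts ∈ range (n + 1) :=
    fun P => mem_range_succ_iff.2 (by simpa using P.card_parts_le_card)
  have hstirling : ∀ m, stirlingSecond n m = #{P : Finpartition univ | #P.parts = m} := fun m => by
    rw [stirlingSecond, Nat.card_eq_fintype_card, Fintype.card_subtype]
  have hparts := Finpartition.sum_descFactorial_card_parts (α := Fin n) (β := Fin k)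
  rw [Fintype.card_fin, Fintype.card_fin, ← sum_fiberwise_of_maps_to fun P _ => hcard P] at hparts
  rw [← hparts]
  refine sum_congr rfl fun m _ => ?_
  rw [hstirling, sum_const_nat fun P hP => by rw [(mem_filter.1 hP).2]]

theorem stirlingSecond_succ_zero (n : ℕ) : stirlingSecond (n + 1) 0 = 0 := by
  have : IsEmpty {P : Finpartition (univ : Finset (Fin (n + 1))) // #P.parts = 0} := by
    refine ⟨fun ⟨P, hP⟩ => ?_⟩
    rw [card_eq_zero, Finpartition.parts_eq_empty_iff] at hP
    exact absurd (mem_univ (0 : Fin (n + 1))) (by simp [hP])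
  exact Nat.card_of_isEmpty

/-- Summing the counts `F_{n,m} = (n-1)^{\underline{m-1}} · S(n,m)` of Cayley trees
of size `n` with exactly `m` ascending runs over all `m` recovers Cayley's formula
`n^{n-1}`. -/
theorem sum_descFactorial_mul_stirling (n : ℕ) (hn : 1 ≤ n) :
    ∑ m ∈ Finset.Icc 1 n, (n - 1).descFactorial (m - 1) * stirlingSecond n m
      = n ^ (n - 1) := by
  obtain ⟨n, rfl⟩ := Nat.exists_eq_add_of_le' hn
  refine Nat.eq_of_mul_eq_mul_left n.succ_pos ?_
  calc (n + 1) * ∑ m ∈ Icc 1 (n + 1), (n + 1 - 1).descFactorial (m - 1) * stirlingSecond (n + 1) m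
      = ∑ m ∈ range (n + 1), stirlingSecond (n + 1) (m + 1) * (n + 1).descFactorial (m + 1) := by
        rw [mul_sum, ← Ico_add_one_right_eq_Icc, sum_Ico_eq_sum_range]
        refine sum_congr rfl fun m _ => ?_
        rw [Nat.succ_descFactorial_succ, add_comm 1 m, Nat.add_sub_cancel, Nat.add_sub_cancel]
        ring
    _ = ∑ m ∈ range (n + 2), stirlingSecond (n + 1) m * (n + 1).descFactorial m := by
        rw [sum_range_succ' _ (n + 1), stirlingSecond_succ_zero, zero_mul, add_zero]
    _ = (n + 1) * (n + 1) ^ (n + 1 - 1) := by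
        rw [sum_stirlingSecond_mul_descFactorial, Nat.add_sub_cancel, pow_succ']
end
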